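/- arXiv:1905.04461 — 12 statements merged into one kernel-verified Lean document; each statement's English description precedes it below -/
import Mathlib

section
/- If there exists an antipodal k-splitting of the n-dimensional Boolean hypercube (a partition of {0,1}^n into exactly 2^k axis-aligned (n-k)-dimensional faces such that any two parallel faces in the partition are antipodal), then there exists an antipodal k-splitting of the (n+1)-dimensional Boolean hypercube. -/
/-- The set of points of the Boolean hypercube `{0,1}^n` belonging to the face
encoded by `a : Fin n → Option Bool` (`none` means an asterisk). -/
def faceSet {n : ℕ} (a : Fin n → Option Bool) : Set (Fin n → Bool) :=
  {x | ∀ i : Fin n, ∀ b : Bool, a i = some b → x i = b}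

/-- Two face codes are parallel if they have the same asterisk positions. -/
def IsParallel {n : ℕ} (a b : Fin n → Option Bool) : Prop :=
  ∀ i, a i = none ↔ b i = none

/-- A pair of parallel faces is antipodal if the non-asterisk entries are
bitwise complementary. -/
def IsAntipodalPair {n : ℕ} (a b : Fin n → Option Bool) : Prop :=
  IsParallel a b ∧ ∀ i c, a i = some c → b i = some (!c)

/-- `a` encodes an `(n-k)`-dimensional face: exactly `k` coordinates are fixed. -/
def IsFaceCode (n k : ℕ) (a : Fin n → Option Bool) : Prop :=
  (Finset.univ.filter fun i => a i ≠ none).card = k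

/-- A `k`-splitting of `{0,1}^n`: a partition of the hypercube into exactly
`2^k` faces of dimension `n-k`. -/
def IsSplitting (n k : ℕ) (A : Finset (Fin n → Option Bool)) : Prop :=
  A.card = 2 ^ k ∧ (∀ a ∈ A, IsFaceCode n k a) ∧
    ∀ x : Fin n → Bool, ∃! a, a ∈ A ∧ x ∈ faceSet a

/-- An antipodal `k`-splitting: a `k`-splitting in which any two distinct
parallel faces are antipodal. -/
def IsAntipodalSplitting (n k : ℕ) (A : Finset (Fin n → Option Bool)) : Prop :=
  IsSplitting n k A ∧ ∀ a ∈ A, ∀ b ∈ A, a ≠ b → IsParallel a b → IsAntipodalPair a b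

theorem stmt0 (n k : ℕ)
    (h : ∃ A : Finset (Fin n → Option Bool), IsAntipodalSplitting n k A) :
    ∃ B : Finset (Fin (n + 1) → Option Bool), IsAntipodalSplitting (n + 1) k B := by
  obtain ⟨A, ⟨⟨hcard, hface, hpart⟩, hanti⟩⟩ := h
  have hinj : Function.Injective
      (fun a : Fin n → Option Bool => (Fin.snoc a none : Fin (n+1) → Option Bool)) := by
    intro a b hab
    funext i
    have := congrFun hab (Fin.castSucc i)
    simpa [Fin.snoc_castSucc] using this
  refine ⟨A.image (fun a => Fin.snoc a none), ⟨⟨?_, ?_, ?_⟩, ?_⟩⟩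
  · rw [Finset.card_image_of_injective _ hinj, hcard]
  · intro b hb
    obtain ⟨a, ha, rfl⟩ := Finset.mem_image.mp hb
    have hfa := hface a ha
    unfold IsFaceCode at hfa ⊢
    rw [Finset.card_filter] at hfa ⊢
    rw [Fin.sum_univ_castSucc]
    simpa [Fin.snoc_castSucc, Fin.snoc_last] using hfa
  · intro x
    obtain ⟨a, ⟨ha, hxa⟩, huniq⟩ := hpart (x ∘ Fin.castSucc)
    refine ⟨Fin.snoc a none, ⟨Finset.mem_image_of_mem _ ha, ?_⟩, ?_⟩
    · intro i c hic
      induction i using Fin.lastCases with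
      | last => simp [Fin.snoc_last] at hic
      | cast j =>
        rw [Fin.snoc_castSucc] at hic
        exact hxa j c hic
    · rintro b ⟨hbmem, hxb⟩
      obtain ⟨c, hc, rfl⟩ := Finset.mem_image.mp hbmem
      have : c = a := by
        refine huniq c ⟨hc, ?_⟩
        intro i d hid
        have := hxb (Fin.castSucc i) d (by simpa [Fin.snoc_castSucc] using hid)
        simpa using this
      rw [this]
  · intro b hb b' hb' hne hpar
    obtain ⟨a, ha, rfl⟩ := Finset.mem_image.mp hb
    obtain ⟨a', ha', rfl⟩ := Finset.mem_image.mp hb'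
    have hane : a ≠ a' := fun heq => hne (by rw [heq])
    have hpar' : IsParallel a a' := by
      intro i
      have := hpar (Fin.castSucc i)
      simpa [Fin.snoc_castSucc] using this
    obtain ⟨hp, hc⟩ := hanti a ha a' ha' hane hpar'
    refine ⟨hpar, ?_⟩
    intro i c hic
    induction i using Fin.lastCases with
    | last => simp [Fin.snoc_last] at hic
    | cast j =>
      rw [Fin.snoc_castSucc] at hic
      have := hc j c hic
      simpa [Fin.snoc_castSucc] using this
end

section
/- If there exists an antipodal k1-splitting of the n1-dimensional Boolean hypercube and an antipodal k2-splitting of the n2-dimensional Boolean hypercube, then there exists an antipodal (k1·k2)-splitting of the (n1·n2)-dimensional Boolean hypercube. -/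
open Finset

lemma mem_faceSet {n : ℕ} {a : Fin n → Option Bool} {x : Fin n → Bool} :
    x ∈ faceSet a ↔ ∀ i b, a i = some b → x i = b := Iff.rfl

instance {n : ℕ} (a : Fin n → Option Bool) : DecidablePred (· ∈ faceSet a) :=
  fun _ => decidable_of_iff _ mem_faceSet.symm

lemma faceSet_card {n k : ℕ} {a : Fin n → Option Bool} (h : IsFaceCode n k a) :
    (Finset.univ.filter (· ∈ faceSet a)).card = 2 ^ (n - k) := by
  classical
  rw [← Fintype.card_subtype]
  have E : {x : Fin n → Bool // x ∈ faceSet a} ≃ ({i : Fin n // a i = none} → Bool) :=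
    { toFun := fun x i => x.1 i.1
      invFun := fun f => ⟨fun i => if h : a i = none then f ⟨i, h⟩ else (a i).getD false, by
        simp only [mem_faceSet]
        intro i b hb
        simp [hb]⟩
      left_inv := by
        intro x
        ext i
        by_cases h : a i = none
        · simp [h]
        · obtain ⟨b, hb⟩ := Option.ne_none_iff_exists'.mp h
          have := x.2 i b hb
          simp [hb, this]
      right_inv := by
        intro f
        funext i
        simp [i.2] }
  rw [Fintype.card_congr E, Fintype.card_fun]
  congr 1
  rw [Fintype.card_subtype]
  have hsum := Finset.card_filter_add_card_filter_not
    (s := (univ : Finset (Fin n))) (p := fun i => a i = none)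
  have hk : (univ.filter fun i => ¬ a i = none).card = k := h
  simp only [Finset.card_univ, Fintype.card_fin] at hsum
  omega

lemma splitting_card {n k : ℕ} {C : Finset (Fin n → Option Bool)}
    (hface : ∀ a ∈ C, IsFaceCode n k a)
    (hpart : ∀ x : Fin n → Bool, ∃! a, a ∈ C ∧ x ∈ faceSet a) :
    C.card = 2 ^ k := by
  classical
  obtain ⟨c0, ⟨hc0, -⟩, -⟩ := hpart (fun _ => false)
  have hkn : k ≤ n := by
    have h1 : (univ.filter fun i => c0 i ≠ none).card = k := hface c0 hc0
    have h2 := Finset.card_filter_le (univ : Finset (Fin n)) (fun i => c0 i ≠ none)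
    simp only [Finset.card_univ, Fintype.card_fin] at h2
    omega
  have hU : (Finset.univ : Finset (Fin n → Bool))
      = C.biUnion (fun c => univ.filter (· ∈ faceSet c)) := by
    ext x
    simp only [mem_univ, true_iff, mem_biUnion, mem_filter, true_and]
    obtain ⟨a, ⟨ha, hx⟩, -⟩ := hpart x
    exact ⟨a, ha, hx⟩
  have hdisj : ∀ a ∈ C, ∀ b ∈ C, a ≠ b →
      Disjoint (univ.filter (· ∈ faceSet a)) (univ.filter (· ∈ faceSet b)) := by
    intro a ha b hb hne
    rw [Finset.disjoint_left]
    intro x hxa hxb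
    simp only [mem_filter] at hxa hxb
    obtain ⟨u, -, hu⟩ := hpart x
    exact hne ((hu a ⟨ha, hxa.2⟩).trans (hu b ⟨hb, hxb.2⟩).symm)
  have hcard := congrArg Finset.card hU
  rw [Finset.card_biUnion hdisj] at hcard
  rw [Finset.sum_congr rfl (fun c hc => faceSet_card (hface c hc)), Finset.sum_const,
    smul_eq_mul] at hcard
  have hcu : (Finset.univ : Finset (Fin n → Bool)).card = 2 ^ n := by
    rw [Finset.card_univ, Fintype.card_fun]
    simp
  rw [hcu] at hcard
  have hpow : 2 ^ n = 2 ^ k * 2 ^ (n - k) := by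
    rw [← pow_add]
    congr 1
    omega
  rw [hpow] at hcard
  exact Nat.eq_of_mul_eq_mul_right (by positivity) hcard.symm

lemma trivial_split (n : ℕ) : IsAntipodalSplitting n 0 {fun _ => none} := by
  classical
  refine ⟨⟨by simp, ?_, ?_⟩, ?_⟩
  · intro a ha
    simp only [Finset.mem_singleton] at ha
    subst ha
    simp [IsFaceCode]
  · intro x
    refine ⟨fun _ => none, ⟨by simp, ?_⟩, ?_⟩
    · intro i b hb
      simp at hb
    · rintro a ⟨ha, -⟩
      simpa using ha
  · intro a ha b hb hne _
    simp only [Finset.mem_singleton] at ha hb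
    exact absurd (ha.trans hb.symm) hne

/-- Signature bit of a face code: its value at the least fixed coordinate. -/
def gfun {n : ℕ} (a : Fin n → Option Bool) : Bool :=
  if h : (Finset.univ.filter fun i => a i ≠ none).Nonempty then
    (a ((Finset.univ.filter fun i => a i ≠ none).min' h)).getD false
  else false

lemma gfun_inj {n k : ℕ} {A : Finset (Fin n → Option Bool)}
    (hA : IsAntipodalSplitting n k A) (hk : 1 ≤ k) :
    ∀ a ∈ A, ∀ a' ∈ A, IsParallel a a' → gfun a = gfun a' → a = a' := by
  intro a ha a' ha' hpar hg
  by_contra hne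
  obtain ⟨-, hanti⟩ := hA.2 a ha a' ha' hne hpar
  have hFa : (Finset.univ.filter fun i => a i ≠ none).Nonempty := by
    rw [← Finset.card_pos]
    have : (Finset.univ.filter fun i => a i ≠ none).card = k := hA.1.2.1 a ha
    omega
  have hFF : (Finset.univ.filter fun i => a' i ≠ none)
      = (Finset.univ.filter fun i => a i ≠ none) := by
    ext i
    simp only [Finset.mem_filter, Finset.mem_univ, true_and]
    exact not_congr (hpar i).symm
  set i0 := (Finset.univ.filter fun i => a i ≠ none).min' hFa with hi0
  have hmem : a i0 ≠ none := by
    have := Finset.min'_mem _ hFa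
    rw [Finset.mem_filter] at this
    exact this.2
  obtain ⟨β, hβ⟩ := Option.ne_none_iff_exists'.mp hmem
  have hβ' : a' i0 = some (!β) := hanti i0 β hβ
  have h1 : gfun a = β := by
    rw [gfun, dif_pos hFa, ← hi0, hβ]
    rfl
  have h2 : gfun a' = !β := by
    rw [gfun]
    simp only [hFF]
    rw [dif_pos hFa, ← hi0, hβ']
    rfl
  rw [h1, h2] at hg
  simp at hg

/-- Column `j` of a code on the product cube. -/
def colf (n1 n2 : ℕ) (c : Fin (n1 * n2) → Option Bool) (j : Fin n2) (i : Fin n1) : Option Bool :=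
  c (finProdFinEquiv (i, j))

def Qpred (n1 n2 : ℕ) (A : Finset (Fin n1 → Option Bool)) (b : Fin n2 → Option Bool)
    (c : Fin (n1 * n2) → Option Bool) : Prop :=
  ∀ j : Fin n2, (b j = none → ∀ i, colf n1 n2 c j i = none) ∧
    (∀ β : Bool, b j = some β → ∃ a ∈ A, gfun a = β ∧ (fun i => colf n1 n2 c j i) = a)

noncomputable def Cset (n1 n2 : ℕ) (A : Finset (Fin n1 → Option Bool))
    (B : Finset (Fin n2 → Option Bool)) : Finset (Fin (n1 * n2) → Option Bool) :=
  @Finset.filter _ (fun c => ∃ b ∈ B, Qpred n1 n2 A b c) (Classical.decPred _) Finset.univ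

lemma mem_Cset {n1 n2 : ℕ} {A : Finset (Fin n1 → Option Bool)}
    {B : Finset (Fin n2 → Option Bool)} {c : Fin (n1 * n2) → Option Bool} :
    c ∈ Cset n1 n2 A B ↔ ∃ b ∈ B, Qpred n1 n2 A b c := by
  letI : DecidablePred (fun c => ∃ b ∈ B, Qpred n1 n2 A b c) := Classical.decPred _
  rw [Cset, Finset.mem_filter]
  exact ⟨fun h => h.2, fun h => ⟨Finset.mem_univ _, h⟩⟩

lemma card_filter_equiv {α β : Type*} [Fintype α] [Fintype β] [DecidableEq β] (σ : α ≃ β)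
    (p : β → Prop) [DecidablePred p] :
    (Finset.univ.filter p).card = (Finset.univ.filter fun a => p (σ a)).card := by
  classical
  rw [← Finset.card_map (σ.toEmbedding)]
  congr 1
  ext b
  simp only [Finset.mem_map, Finset.mem_filter, Finset.mem_univ, true_and,
    Equiv.coe_toEmbedding]
  constructor
  · intro hb
    exact ⟨σ.symm b, by simpa using hb, by simp⟩
  · rintro ⟨a, hpa, rfl⟩
    exact hpa

lemma card_filter_prod {α β : Type*} [Fintype α] [Fintype β] (p : α → β → Prop)
    [∀ a b, Decidable (p a b)] :
    (Finset.univ.filter fun q : α × β => p q.1 q.2).card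
      = ∑ b : β, (Finset.univ.filter fun a => p a b).card := by
  classical
  rw [Finset.card_filter, ← Finset.univ_product_univ, Finset.sum_product_right]
  refine Finset.sum_congr rfl fun b _ => ?_
  rw [Finset.card_filter]

lemma Cface {n1 k1 n2 k2 : ℕ} {A : Finset (Fin n1 → Option Bool)}
    {B : Finset (Fin n2 → Option Bool)} (hA : IsAntipodalSplitting n1 k1 A)
    (hB : IsAntipodalSplitting n2 k2 B) :
    ∀ c ∈ Cset n1 n2 A B, IsFaceCode (n1 * n2) (k1 * k2) c := by
  classical
  intro c hc
  obtain ⟨b, hbB, hQ⟩ := mem_Cset.mp hc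
  simp only [Qpred, colf] at hQ
  show (Finset.univ.filter fun m => c m ≠ none).card = k1 * k2
  rw [card_filter_equiv finProdFinEquiv (fun m => c m ≠ none)]
  rw [show (Finset.univ.filter fun p : Fin n1 × Fin n2 => c (finProdFinEquiv p) ≠ none)
      = (Finset.univ.filter fun p : Fin n1 × Fin n2 => c (finProdFinEquiv (p.1, p.2)) ≠ none)
      from rfl]
  rw [card_filter_prod (fun (i : Fin n1) (j : Fin n2) => c (finProdFinEquiv (i, j)) ≠ none)]
  have h3 : ∀ j : Fin n2,
      (Finset.univ.filter fun i => c (finProdFinEquiv (i, j)) ≠ none).card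
        = if b j = none then 0 else k1 := by
    intro j
    rcases hbj : b j with _ | β
    · rw [if_pos rfl]
      rw [Finset.card_eq_zero, Finset.filter_eq_empty_iff]
      intro i _
      simp [(hQ j).1 hbj i]
    · rw [if_neg (by simp)]
      obtain ⟨a, haA, -, hcol⟩ := (hQ j).2 β hbj
      have hfc : (Finset.univ.filter fun i => c (finProdFinEquiv (i, j)) ≠ none)
          = (Finset.univ.filter fun i => a i ≠ none) := by
        apply Finset.filter_congr
        intro i _
        rw [congrFun hcol i]
      rw [hfc]
      exact hA.1.2.1 a haA
  rw [Finset.sum_congr rfl (fun j _ => h3 j)]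
  rw [Finset.sum_ite, Finset.sum_const_zero, Finset.sum_const, smul_eq_mul, zero_add]
  have hb2 : (Finset.univ.filter fun j => ¬ b j = none).card = k2 := hB.1.2.1 b hbB
  rw [hb2, mul_comm]

lemma Cpart {n1 k1 n2 k2 : ℕ} {A : Finset (Fin n1 → Option Bool)}
    {B : Finset (Fin n2 → Option Bool)} (hA : IsAntipodalSplitting n1 k1 A)
    (hB : IsAntipodalSplitting n2 k2 B) :
    ∀ x : Fin (n1 * n2) → Bool, ∃! c, c ∈ Cset n1 n2 A B ∧ x ∈ faceSet c := by
  classical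
  intro x
  choose α hα huα using fun j => hA.1.2.2 (fun i => x (finProdFinEquiv (i, j)))
  obtain ⟨b, ⟨hbB, hby⟩, hbu⟩ := hB.1.2.2 (fun j => gfun (α j))
  set c0 : Fin (n1 * n2) → Option Bool := fun m =>
    (b (finProdFinEquiv.symm m).2).bind fun _ =>
      α (finProdFinEquiv.symm m).2 (finProdFinEquiv.symm m).1 with hc0
  have hcol0 : ∀ (i : Fin n1) (j : Fin n2),
      c0 (finProdFinEquiv (i, j)) = (b j).bind fun _ => α j i := by
    intro i j
    rw [hc0]
    simp
  refine ⟨c0, ⟨?_, ?_⟩, ?_⟩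
  · rw [mem_Cset]
    refine ⟨b, hbB, ?_⟩
    intro j
    simp only [Qpred, colf]
    constructor
    · intro hbj i
      rw [hcol0, hbj]
      rfl
    · intro β hbj
      refine ⟨α j, (hα j).1, ?_, ?_⟩
      · exact mem_faceSet.mp hby j β hbj
      · funext i
        rw [hcol0, hbj]
        rfl
  · rw [mem_faceSet]
    intro m γ hm
    obtain ⟨⟨i, j⟩, rfl⟩ : ∃ p : Fin n1 × Fin n2, finProdFinEquiv p = m :=
      ⟨finProdFinEquiv.symm m, Equiv.apply_symm_apply _ _⟩
    rw [hcol0] at hm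
    rcases hbj : b j with _ | β
    · rw [hbj] at hm
      simp at hm
    · rw [hbj] at hm
      simp only [Option.bind_some] at hm
      exact mem_faceSet.mp (hα j).2 i γ hm
  · rintro c ⟨hcC, hcx⟩
    obtain ⟨b', hb'B, hQ'⟩ := mem_Cset.mp hcC
    simp only [Qpred, colf] at hQ'
    have hkey : ∀ j β, b' j = some β →
        (fun i => c (finProdFinEquiv (i, j))) = α j ∧ gfun (α j) = β := by
      intro j β hbj
      obtain ⟨a, haA, hga, hcol⟩ := (hQ' j).2 β hbj
      have hxa : (fun i => x (finProdFinEquiv (i, j))) ∈ faceSet a := by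
        rw [mem_faceSet]
        intro i γ hai
        refine mem_faceSet.mp hcx _ γ ?_
        rw [congrFun hcol i]
        exact hai
      have haα : a = α j := huα j a ⟨haA, hxa⟩
      rw [← haα]
      exact ⟨hcol, hga⟩
    have hyb' : (fun j => gfun (α j)) ∈ faceSet b' := by
      rw [mem_faceSet]
      intro j β hbj
      exact (hkey j β hbj).2
    have hbb : b' = b := hbu b' ⟨hb'B, hyb'⟩
    subst hbb
    funext m
    obtain ⟨⟨i, j⟩, rfl⟩ : ∃ p : Fin n1 × Fin n2, finProdFinEquiv p = m :=
      ⟨finProdFinEquiv.symm m, Equiv.apply_symm_apply _ _⟩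
    rw [hcol0]
    rcases hbj : b' j with _ | β
    · rw [Option.bind_none]
      exact (hQ' j).1 hbj i
    · rw [Option.bind_some]
      exact congrFun (hkey j β hbj).1 i

lemma Canti {n1 k1 n2 k2 : ℕ} {A : Finset (Fin n1 → Option Bool)}
    {B : Finset (Fin n2 → Option Bool)} (hA : IsAntipodalSplitting n1 k1 A)
    (hB : IsAntipodalSplitting n2 k2 B) (hk1 : 1 ≤ k1) :
    ∀ c ∈ Cset n1 n2 A B, ∀ c' ∈ Cset n1 n2 A B, c ≠ c' → IsParallel c c' →
      IsAntipodalPair c c' := by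
  classical
  intro c hc c' hc' hne hpar
  obtain ⟨b, hbB, hQ⟩ := mem_Cset.mp hc
  obtain ⟨b', hb'B, hQ'⟩ := mem_Cset.mp hc'
  simp only [Qpred, colf] at hQ hQ'
  have hex : ∀ (bb : Fin n2 → Option Bool) (cc : Fin (n1 * n2) → Option Bool),
      (∀ j : Fin n2, (bb j = none → ∀ i, cc (finProdFinEquiv (i, j)) = none) ∧
        (∀ β, bb j = some β → ∃ a ∈ A, gfun a = β ∧ (fun i => cc (finProdFinEquiv (i, j))) = a)) →
      ∀ j β, bb j = some β → ∃ i, cc (finProdFinEquiv (i, j)) ≠ none := by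
    intro bb cc hQQ j β hbj
    obtain ⟨a, haA, -, hcol⟩ := (hQQ j).2 β hbj
    have hFa : (Finset.univ.filter fun i => a i ≠ none).Nonempty := by
      rw [← Finset.card_pos]
      have hca : (Finset.univ.filter fun i => a i ≠ none).card = k1 := hA.1.2.1 a haA
      omega
    obtain ⟨i, hi⟩ := hFa
    rw [Finset.mem_filter] at hi
    refine ⟨i, ?_⟩
    rw [congrFun hcol i]
    exact hi.2
  have hparc : ∀ (j : Fin n2) (i : Fin n1),
      c (finProdFinEquiv (i, j)) = none ↔ c' (finProdFinEquiv (i, j)) = none :=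
    fun j i => hpar _
  have hbb' : IsParallel b b' := by
    intro j
    constructor
    · intro hbj
      by_contra hb'j
      obtain ⟨β, hβ⟩ := Option.ne_none_iff_exists'.mp hb'j
      obtain ⟨i, hi⟩ := hex b' c' hQ' j β hβ
      exact hi ((hparc j i).mp ((hQ j).1 hbj i))
    · intro hb'j
      by_contra hbj
      obtain ⟨β, hβ⟩ := Option.ne_none_iff_exists'.mp hbj
      obtain ⟨i, hi⟩ := hex b c hQ j β hβ
      exact hi ((hparc j i).mpr ((hQ' j).1 hb'j i))
  have hcols : ∀ j β β', b j = some β → b' j = some β' →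
      ∃ a a', a ∈ A ∧ a' ∈ A ∧ (fun i => c (finProdFinEquiv (i, j))) = a ∧
        (fun i => c' (finProdFinEquiv (i, j))) = a' ∧ gfun a = β ∧ gfun a' = β' ∧
        IsParallel a a' := by
    intro j β β' hbj hb'j
    obtain ⟨a, haA, hga, hcol⟩ := (hQ j).2 β hbj
    obtain ⟨a', ha'A, hga', hcol'⟩ := (hQ' j).2 β' hb'j
    refine ⟨a, a', haA, ha'A, hcol, hcol', hga, hga', ?_⟩
    intro i
    rw [← congrFun hcol i, ← congrFun hcol' i]
    exact hparc j i
  have hbne : b ≠ b' := by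
    rintro rfl
    apply hne
    funext m
    obtain ⟨⟨i, j⟩, rfl⟩ : ∃ p : Fin n1 × Fin n2, finProdFinEquiv p = m :=
      ⟨finProdFinEquiv.symm m, Equiv.apply_symm_apply _ _⟩
    rcases hbj : b j with _ | β
    · rw [(hQ j).1 hbj i, (hQ' j).1 hbj i]
    · obtain ⟨a, a', haA, ha'A, hcol, hcol', hga, hga', hpaa⟩ := hcols j β β hbj hbj
      have haa : a = a' := gfun_inj hA hk1 a haA a' ha'A hpaa (hga.trans hga'.symm)
      rw [congrFun hcol i, congrFun hcol' i, haa]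
  have hanti := hB.2 b hbB b' hb'B hbne hbb'
  refine ⟨hpar, ?_⟩
  intro m γ hm
  obtain ⟨⟨i, j⟩, rfl⟩ : ∃ p : Fin n1 × Fin n2, finProdFinEquiv p = m :=
    ⟨finProdFinEquiv.symm m, Equiv.apply_symm_apply _ _⟩
  rcases hbj : b j with _ | β
  · rw [(hQ j).1 hbj i] at hm
    exact absurd hm (by simp)
  · have hb'j : b' j = some (!β) := hanti.2 j β hbj
    obtain ⟨a, a', haA, ha'A, hcol, hcol', hga, hga', hpaa⟩ := hcols j β (!β) hbj hb'j
    have hane : a ≠ a' := by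
      rintro rfl
      rw [hga] at hga'
      simp at hga'
    have hAanti := hA.2 a haA a' ha'A hane hpaa
    have hai : a i = some γ := by
      rw [← congrFun hcol i]
      exact hm
    have hval := hAanti.2 i γ hai
    rw [congrFun hcol' i, hval]

theorem stmt1 (n1 k1 n2 k2 : ℕ)
    (h1 : ∃ A : Finset (Fin n1 → Option Bool), IsAntipodalSplitting n1 k1 A)
    (h2 : ∃ B : Finset (Fin n2 → Option Bool), IsAntipodalSplitting n2 k2 B) :
    ∃ C : Finset (Fin (n1 * n2) → Option Bool),
      IsAntipodalSplitting (n1 * n2) (k1 * k2) C := by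
  classical
  obtain ⟨A, hA⟩ := h1
  obtain ⟨B, hB⟩ := h2
  rcases Nat.eq_zero_or_pos k1 with hk1 | hk1
  · rw [hk1, Nat.zero_mul]
    exact ⟨_, trivial_split _⟩
  · exact ⟨Cset n1 n2 A B,
      ⟨⟨splitting_card (Cface hA hB) (Cpart hA hB), Cface hA hB, Cpart hA hB⟩,
        Canti hA hB hk1⟩⟩
end

section
/- If k is even and k ≥ 2, then no antipodal k-splitting of {0,1}^n exists for any n ≥ k. -/
namespace Stmt3Aux

open Finset

/-- Sign of a boolean. -/
def sgn (b : Bool) : ℤ := if b then -1 else 1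

lemma sgn_not (b : Bool) : sgn (!b) = - sgn b := by cases b <;> simp [sgn]

lemma sgn_ne_zero (b : Bool) : sgn b ≠ 0 := by cases b <;> simp [sgn]

variable {n : ℕ}

/-- Character associated to a set `T` of coordinates. -/
def eps (T : Finset (Fin n)) (x : Fin n → Bool) : ℤ := ∏ i ∈ T, sgn (x i)

lemma eps_ne_zero (T : Finset (Fin n)) (x : Fin n → Bool) : eps T x ≠ 0 :=
  Finset.prod_ne_zero_iff.2 fun i _ => sgn_ne_zero (x i)

lemma eps_update {T : Finset (Fin n)} {i₀ : Fin n} (hi : i₀ ∈ T) (x : Fin n → Bool) :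
    eps T (Function.update x i₀ (!x i₀)) = - eps T x := by
  unfold eps
  rw [← Finset.mul_prod_erase T _ hi,
    ← Finset.mul_prod_erase T (fun i => sgn (x i)) hi]
  have h1 : ∏ i ∈ T.erase i₀, sgn (Function.update x i₀ (!x i₀) i)
      = ∏ i ∈ T.erase i₀, sgn (x i) :=
    Finset.prod_congr rfl fun i hi' => by
      rw [Function.update_of_ne (Finset.ne_of_mem_erase hi')]
  rw [h1, Function.update_self, sgn_not]
  ring

lemma update_ne (x : Fin n → Bool) (i₀ : Fin n) :
    Function.update x i₀ (!x i₀) ≠ x := by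
  intro h
  have := congrFun h i₀
  simp at this

lemma update_update (x : Fin n → Bool) (i₀ : Fin n) :
    Function.update (Function.update x i₀ (!x i₀)) i₀
      (!(Function.update x i₀ (!x i₀)) i₀) = x := by
  funext j
  by_cases hj : j = i₀
  · subst hj; simp
  · simp [Function.update_of_ne hj]

end Stmt3Aux

open Finset Stmt3Aux in
theorem stmt3 (k n : ℕ) (hk : Even k) (hk2 : 2 ≤ k) (hn : k ≤ n) :
    ¬ ∃ A : Finset (Fin n → Option Bool), IsAntipodalSplitting n k A := by
  classical
  rintro ⟨A, ⟨⟨hcard, hfc, hpart⟩, hanti⟩⟩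
  obtain ⟨a₀, ha₀⟩ : A.Nonempty := Finset.card_pos.mp (by rw [hcard]; positivity)
  set T : Finset (Fin n) := Finset.univ.filter (fun i => a₀ i ≠ none) with hTdef
  have hTk : T.card = k := hfc a₀ ha₀
  -- fixed set of a face code
  set fix : (Fin n → Option Bool) → Finset (Fin n) :=
    fun a => Finset.univ.filter (fun i => a i ≠ none) with hfixdef
  -- canonical point of a face
  set pt : (Fin n → Option Bool) → (Fin n → Bool) := fun a i => (a i).getD false with hptdef
  have hpt_mem : ∀ a, pt a ∈ faceSet a := by
    intro a i b hib
    simp [hptdef, hib]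
  -- the face as a finset
  set fFace : (Fin n → Option Bool) → Finset (Fin n → Bool) :=
    fun a => Finset.univ.filter (fun x => x ∈ faceSet a) with hfdef
  set F : (Fin n → Option Bool) → ℤ := fun a => ∑ x ∈ fFace a, eps T x with hFdef
  -- Step 1 : total sum is zero
  have hTne : T.Nonempty := Finset.card_pos.mp (by omega)
  obtain ⟨i₀, hi₀⟩ := hTne
  have htotal : ∑ x : Fin n → Bool, eps T x = 0 :=
    Finset.sum_involution (fun x _ => Function.update x i₀ (!x i₀))
      (fun x _ => by rw [eps_update hi₀]; ring)
      (fun x _ _ => update_ne x i₀)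
      (fun x _ => Finset.mem_univ _)
      (fun x _ => update_update x i₀)
  -- Step 2 : partition
  have key : ∀ x : Fin n → Bool,
      ∑ a ∈ A, (if x ∈ faceSet a then eps T x else 0) = eps T x := by
    intro x
    obtain ⟨a, ⟨haA, hax⟩, huniq⟩ := hpart x
    rw [← Finset.sum_filter]
    have hsingle : A.filter (fun a => x ∈ faceSet a) = {a} := by
      ext b
      simp only [Finset.mem_filter, Finset.mem_singleton]
      constructor
      · rintro ⟨hb, hbx⟩; exact huniq b ⟨hb, hbx⟩
      · rintro rfl; exact ⟨haA, hax⟩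
    rw [hsingle, Finset.sum_singleton]
  have hsplit : ∑ a ∈ A, F a = ∑ x : Fin n → Bool, eps T x := by
    calc ∑ a ∈ A, F a
        = ∑ a ∈ A, ∑ x : Fin n → Bool, (if x ∈ faceSet a then eps T x else 0) := by
          apply Finset.sum_congr rfl
          intro a _
          rw [hFdef]
          simp only [hfdef]
          rw [Finset.sum_filter]
      _ = ∑ x : Fin n → Bool, ∑ a ∈ A, (if x ∈ faceSet a then eps T x else 0) :=
          Finset.sum_comm
      _ = ∑ x : Fin n → Bool, eps T x := Finset.sum_congr rfl fun x _ => key x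
  -- Step 3 : faces with fixed set ≠ T contribute 0
  have hzero : ∀ a ∈ A, fix a ≠ T → F a = 0 := by
    intro a haA hne
    have hka : (fix a).card = k := hfc a haA
    -- find i₁ ∈ T with a i₁ = none
    have : ¬ T ⊆ fix a := by
      intro hsub
      exact hne (Finset.eq_of_subset_of_card_le hsub (by omega)).symm
    obtain ⟨i₁, hi₁T, hi₁f⟩ := Finset.not_subset.mp this
    have hai₁ : a i₁ = none := by
      by_contra h
      exact hi₁f (Finset.mem_filter.mpr ⟨Finset.mem_univ _, h⟩)
    have hmem : ∀ x ∈ fFace a, Function.update x i₁ (!x i₁) ∈ fFace a := by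
      intro x hx
      simp only [hfdef, Finset.mem_filter, Finset.mem_univ, true_and] at hx ⊢
      intro i b hib
      have hii₁ : i ≠ i₁ := by rintro rfl; rw [hai₁] at hib; exact Option.some_ne_none b hib.symm
      rw [Function.update_of_ne hii₁]
      exact hx i b hib
    have : F a = ∑ x ∈ fFace a, eps T x := rfl
    rw [this]
    exact Finset.sum_involution (fun x _ => Function.update x i₁ (!x i₁))
      (fun x _ => by rw [eps_update hi₁T]; ring)
      (fun x _ _ => update_ne x i₁)
      hmem
      (fun x _ => update_update x i₁)
  -- Step 4 : faces with fixed set = T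
  have hval : ∀ a, fix a = T → F a = (fFace a).card * eps T (pt a) := by
    intro a hfa
    have hconst : ∀ x ∈ fFace a, eps T x = eps T (pt a) := by
      intro x hx
      simp only [hfdef, Finset.mem_filter, Finset.mem_univ, true_and] at hx
      unfold eps
      apply Finset.prod_congr rfl
      intro i hiT
      have : a i ≠ none := by
        have := hfa ▸ hiT
        simpa [hfixdef] using this
      obtain ⟨c, hc⟩ := Option.ne_none_iff_exists'.mp this
      rw [hx i c hc]
      simp [hptdef, hc]
    have hFa : F a = ∑ x ∈ fFace a, eps T x := rfl
    rw [hFa, Finset.sum_congr rfl hconst, Finset.sum_const, nsmul_eq_mul]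
  have hface_pos : ∀ a, 0 < (fFace a).card := by
    intro a
    apply Finset.card_pos.mpr
    exact ⟨pt a, Finset.mem_filter.mpr ⟨Finset.mem_univ _, hpt_mem a⟩⟩
  -- Step 5 : signs agree on P
  have hsigne : ∀ a ∈ A, fix a = T → eps T (pt a) = eps T (pt a₀) := by
    intro a haA hfa
    by_cases hea : a = a₀
    · rw [hea]
    · have hpar : IsParallel a₀ a := by
        intro i
        have h1 : (i ∈ fix a₀) ↔ (i ∈ fix a) := by rw [hfa]
        simp only [hfixdef, Finset.mem_filter, Finset.mem_univ, true_and] at h1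
        constructor
        · intro h; by_contra h'; exact (h1.mpr h') h
        · intro h; by_contra h'; exact (h1.mp h') h
      obtain ⟨_, hflip⟩ := hanti a₀ ha₀ a haA (fun h => hea h.symm) hpar
      have hptval : ∀ i ∈ T, pt a i = ! pt a₀ i := by
        intro i hiT
        have : a₀ i ≠ none := by simpa [hTdef] using hiT
        obtain ⟨c, hc⟩ := Option.ne_none_iff_exists'.mp this
        rw [hptdef]
        simp only
        rw [hc, hflip i c hc]
        simp
      calc eps T (pt a) = ∏ i ∈ T, sgn (! pt a₀ i) :=
            Finset.prod_congr rfl fun i hi => by rw [hptval i hi]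
        _ = ∏ i ∈ T, (-1) * sgn (pt a₀ i) := by
            apply Finset.prod_congr rfl
            intro i _
            rw [sgn_not]; ring_nf
        _ = (-1 : ℤ) ^ T.card * eps T (pt a₀) := by
            rw [Finset.prod_mul_distrib, Finset.prod_const, eps]
        _ = eps T (pt a₀) := by rw [hTk, hk.neg_one_pow, one_mul]
  -- Step 6 : combine
  set P : Finset (Fin n → Option Bool) := A.filter (fun a => fix a = T) with hPdef
  have ha₀P : a₀ ∈ P := Finset.mem_filter.mpr ⟨ha₀, rfl⟩
  have hPsum : ∑ a ∈ P, F a = ∑ a ∈ A, F a := by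
    apply Finset.sum_filter_of_ne
    intro a haA hFa
    by_contra h
    exact hFa (hzero a haA h)
  have hPval : ∑ a ∈ P, F a = (∑ a ∈ P, ((fFace a).card : ℤ)) * eps T (pt a₀) := by
    rw [Finset.sum_mul]
    apply Finset.sum_congr rfl
    intro a haP
    obtain ⟨haA, hfa⟩ := Finset.mem_filter.mp haP
    rw [hval a hfa, hsigne a haA hfa]
  have hcpos : (0 : ℤ) < ∑ a ∈ P, ((fFace a).card : ℤ) := by
    apply Finset.sum_pos
    · intro a _; exact_mod_cast hface_pos a
    · exact ⟨a₀, ha₀P⟩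
  have : ∑ a ∈ P, F a = 0 := by rw [hPsum, hsplit, htotal]
  rw [hPval] at this
  exact (mul_ne_zero (ne_of_gt hcpos) (eps_ne_zero T (pt a₀))) this
end

section
/- Let A be any partition of {0,1}^n into 2^k axis-aligned (n-k)-faces, where 0 < k < n. Then for every fixed direction (set of asterisk positions), the number of faces of A having that direction is even. -/
open Finset

namespace Stmt4Aux

variable {n : ℕ}

/-- The character on the cube associated to the complement of `s`. -/
def chi (s : Finset (Fin n)) (x : Fin n → Bool) : ℤ :=
  ∏ i ∈ sᶜ, (if x i then (-1 : ℤ) else 1)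

lemma chi_flip (s : Finset (Fin n)) {j : Fin n} (hj : j ∈ sᶜ) (x : Fin n → Bool) :
    chi s (Function.update x j (!x j)) = - chi s x := by
  unfold chi
  rw [← Finset.mul_prod_erase _ _ hj, ← Finset.mul_prod_erase _ _ hj,
    Finset.prod_congr rfl (fun i hi => by
      rw [Function.update_of_ne (Finset.ne_of_mem_erase hi)])]
  simp only [Function.update_self]
  cases x j <;> simp [mul_comm]

lemma flip_mem_face {a : Fin n → Option Bool} {j : Fin n} (hj : a j = none)
    {x : Fin n → Bool} (hx : x ∈ faceSet a) :
    Function.update x j (!x j) ∈ faceSet a := by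
  intro i b hib
  rcases eq_or_ne i j with rfl | hij
  · rw [hib] at hj; exact absurd hj (by simp)
  · rw [Function.update_of_ne hij]; exact hx i b hib

/-- Sum of the character over a set closed under flipping coordinate `j ∉ s` is zero. -/
lemma sum_chi_zero (s : Finset (Fin n)) {j : Fin n} (hj : j ∈ sᶜ)
    (t : Finset (Fin n → Bool))
    (ht : ∀ x ∈ t, Function.update x j (!x j) ∈ t) :
    ∑ x ∈ t, chi s x = 0 := by
  refine Finset.sum_involution (fun x _ => Function.update x j (!x j))
    (fun x hx => by rw [chi_flip s hj]; ring)
    (fun x hx _ h => by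
      have := congrFun h j
      simp at this)
    (fun x hx => ht x hx)
    (fun x hx => by
      funext i
      rcases eq_or_ne i j with rfl | hij
      · simp [Function.update_self]
      · simp [Function.update_of_ne hij])

lemma chi_eq_one_or_neg_one (s : Finset (Fin n)) (x : Fin n → Bool) :
    chi s x = 1 ∨ chi s x = -1 := by
  refine Finset.prod_induction _ (fun z => z = 1 ∨ z = -1) ?_ (Or.inl rfl) ?_
  · rintro a b (rfl | rfl) (rfl | rfl) <;> simp
  · intro i _; cases x i <;> simp

/-- If `a` has direction `s`, then `chi s` is constant on `faceSet a`. -/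
lemma chi_const {a : Fin n → Option Bool} {s : Finset (Fin n)}
    (ha : ∀ i, a i = none ↔ i ∈ s) {x y : Fin n → Bool}
    (hx : x ∈ faceSet a) (hy : y ∈ faceSet a) : chi s x = chi s y := by
  unfold chi
  refine Finset.prod_congr rfl fun i hi => ?_
  rw [Finset.mem_compl] at hi
  have : a i ≠ none := fun h => hi ((ha i).1 h)
  rcases Option.ne_none_iff_exists'.1 this with ⟨b, hb⟩
  rw [hx i b hb, hy i b hb]

/-- The cardinality of a face with direction `s` is `2 ^ s.card`. -/
lemma card_face {a : Fin n → Option Bool} {s : Finset (Fin n)}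
    [DecidablePred (· ∈ faceSet a)] (ha : ∀ i, a i = none ↔ i ∈ s) :
    (Finset.univ.filter (· ∈ faceSet a)).card = 2 ^ s.card := by
  classical
  rw [show (2 : ℕ) ^ s.card = ((s.pi fun _ => (Finset.univ : Finset Bool)).card) by
    rw [Finset.card_pi]; simp]
  refine Finset.card_bij' (fun x _ => fun i _ => x i)
    (fun f _ => fun i => (a i).getD (if h : i ∈ s then f i h else true))
    (fun x hx => by simp [Finset.mem_pi])
    (fun f hf => ?_) (fun x hx => ?_) (fun f hf => ?_)
  · simp only [Finset.mem_filter, Finset.mem_univ, true_and]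
    intro i b hib
    simp [hib]
  · funext i
    simp only [Finset.mem_filter, Finset.mem_univ, true_and] at hx
    by_cases h : i ∈ s
    · have h0 : a i = none := (ha i).2 h
      simp [h0, h]
    · have h0 : a i ≠ none := fun h' => h ((ha i).1 h')
      rcases Option.ne_none_iff_exists'.1 h0 with ⟨b, hb⟩
      simp [hb, hx i b hb, h]
  · funext i hi
    have h0 : a i = none := (ha i).2 hi
    simp [h0, hi]

end Stmt4Aux

theorem stmt4 (n k : ℕ) (hk : 0 < k) (hkn : k < n)
    (A : Finset (Fin n → Option Bool)) (hA : IsSplitting n k A)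
    (s : Finset (Fin n)) :
    Even ((A.filter fun a => ∀ i, a i = none ↔ i ∈ s).card) := by
  classical
  open Stmt4Aux in
  obtain ⟨hcard, hface, huniq⟩ := hA
  set F := A.filter fun a => ∀ i, a i = none ↔ i ∈ s with hF
  -- every a ∈ F has direction s, so s.card = n - k; otherwise F empty
  by_cases hs : s.card = n - k
  swap
  · have : F = ∅ := by
      rw [Finset.eq_empty_iff_forall_notMem]
      intro a haF
      rw [hF, Finset.mem_filter] at haF
      obtain ⟨haA, ha⟩ := haF
      have h1 : (Finset.univ.filter fun i => ¬ a i = none).card = k := by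
        have := hface a haA; unfold IsFaceCode at this; simpa [ne_eq] using this
      have h2 : (Finset.univ.filter fun i => a i = none) = s := by
        ext i; simp [ha i]
      have h3 : (Finset.univ.filter fun i => a i = none).card
          + (Finset.univ.filter fun i => ¬ a i = none).card = n := by
        rw [Finset.card_filter_add_card_filter_not]; simp
      rw [h2] at h3
      exact hs (by omega)
    rw [this]; simp
  -- now s ≠ univ, pick j ∈ sᶜ
  have hsne : sᶜ.Nonempty := by
    rw [← Finset.card_pos, Finset.card_compl, Fintype.card_fin, hs]
    omega
  obtain ⟨j0, hj0⟩ := hsne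
  -- total sum over the cube is zero
  have htotal : ∑ x : Fin n → Bool, chi s x = 0 :=
    sum_chi_zero s hj0 Finset.univ (fun x _ => Finset.mem_univ _)
  -- rewrite total as sum over faces
  have hsplit : ∑ x : Fin n → Bool, chi s x
      = ∑ a ∈ A, ∑ x ∈ Finset.univ.filter (· ∈ faceSet a), chi s x := by
    simp_rw [Finset.sum_filter]
    rw [Finset.sum_comm]
    refine Finset.sum_congr rfl fun x _ => ?_
    obtain ⟨a0, ⟨ha0A, ha0x⟩, hu⟩ := huniq x
    rw [Finset.sum_eq_single_of_mem a0 ha0A]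
    · simp [ha0x]
    · intro b hb hne
      have : x ∉ faceSet b := fun hc => hne (hu b ⟨hb, hc⟩)
      simp [this]
  -- faces not of direction s contribute zero
  have hzero : ∀ a ∈ A.filter (fun a => ¬ ∀ i, a i = none ↔ i ∈ s),
      ∑ x ∈ Finset.univ.filter (· ∈ faceSet a), chi s x = 0 := by
    intro a ha
    rw [Finset.mem_filter] at ha
    obtain ⟨haA, hns⟩ := ha
    -- a has an asterisk outside s
    have h1 : (Finset.univ.filter fun i => a i = none).card = n - k := by
      have h3 : (Finset.univ.filter fun i => a i = none).card
          + (Finset.univ.filter fun i => ¬ a i = none).card = n := by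
        rw [Finset.card_filter_add_card_filter_not]; simp
      have h5 : (Finset.univ.filter fun i => ¬ a i = none).card = k := by
        have := hface a haA; unfold IsFaceCode at this; simpa [ne_eq] using this
      omega
    have h2 : (Finset.univ.filter fun i => a i = none) ≠ s := by
      intro h
      apply hns
      intro i
      constructor
      · intro hi; rw [← h]; simp [hi]
      · intro hi; rw [← h] at hi; simpa using hi
    have h4 : ¬ (Finset.univ.filter fun i => a i = none) ⊆ s := by
      intro hsub
      exact h2 (Finset.eq_of_subset_of_card_le hsub (by omega))
    obtain ⟨j, hj1, hj2⟩ := Finset.not_subset.1 h4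
    rw [Finset.mem_filter] at hj1
    exact sum_chi_zero s (Finset.mem_compl.2 hj2) _
      (fun x hx => by
        rw [Finset.mem_filter] at hx ⊢
        exact ⟨Finset.mem_univ _, flip_mem_face hj1.2 hx.2⟩)
  -- conclusion: sum over F of constant chi values is zero
  have hmain : ∑ a ∈ F, ∑ x ∈ Finset.univ.filter (· ∈ faceSet a), chi s x = 0 := by
    have := Finset.sum_filter_add_sum_filter_not A (fun a => ∀ i, a i = none ↔ i ∈ s)
      (fun a => ∑ x ∈ Finset.univ.filter (· ∈ faceSet a), chi s x)
    rw [Finset.sum_eq_zero hzero, add_zero] at this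
    rw [hF, this, ← hsplit, htotal]
  -- define c a
  set c : (Fin n → Option Bool) → ℤ :=
    fun a => chi s (fun i => (a i).getD true) with hc
  have hinner : ∀ a ∈ F, ∑ x ∈ Finset.univ.filter (· ∈ faceSet a), chi s x
      = c a * 2 ^ s.card := by
    intro a ha
    rw [hF, Finset.mem_filter] at ha
    obtain ⟨haA, hdir⟩ := ha
    have hmem : (fun i => (a i).getD true) ∈ faceSet a := by
      intro i b hib; show (a i).getD true = b; rw [hib]; rfl
    rw [Finset.sum_congr rfl (fun x hx => chi_const hdir
      ((Finset.mem_filter.1 hx).2) hmem), Finset.sum_const, card_face hdir]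
    ring
  have hsum0 : ∑ a ∈ F, c a = 0 := by
    rw [Finset.sum_congr rfl hinner, ← Finset.sum_mul] at hmain
    rcases mul_eq_zero.1 hmain with h | h
    · exact h
    · exact absurd h (by positivity)
  have hpm : ∀ a ∈ F, c a = 1 ∨ c a = -1 := fun a _ => chi_eq_one_or_neg_one s _
  -- parity conclusion
  have : Even ((F.card : ℤ)) := by
    have : (F.card : ℤ) = ∑ a ∈ F, c a + ∑ a ∈ F, (1 - c a) := by
      rw [← Finset.sum_add_distrib]
      simp
    rw [this, hsum0, zero_add]
    refine Finset.even_sum _ fun a ha => ?_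
    rcases hpm a ha with h | h <;> rw [h]
    · simp
    · exact ⟨1, by ring⟩
  exact_mod_cast this
end

section
/- For all integers k, n with 0 < k < n and n - 2k + 2 ≥ 0, there exists a partition of {0,1}^n into 2^k axis-aligned (n-k)-faces such that for every direction, at most two faces of the partition have that direction. -/
def GoodS (n k : ℕ) : Prop :=
  ∃ (A : Finset (Fin n → Option Bool)) (σ : (Fin n → Option Bool) → Bool),
    IsSplitting n k A ∧ ∀ a ∈ A, ∀ b ∈ A, a ≠ b → IsParallel a b → σ a ≠ σ b

lemma base1 (m : ℕ) (hm : 0 < m) : GoodS m 1 := by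
  set z : Fin m := ⟨0, hm⟩ with hz
  set f : Bool → Fin m → Option Bool :=
    fun c i => if (i : ℕ) = 0 then some c else none with hf
  have hfz : ∀ c, f c z = some c := by intro c; simp [hf, hz]
  have hfne : ∀ (c : Bool) (i : Fin m), (i : ℕ) ≠ 0 → f c i = none := by
    intro c i h; simp [hf, h]
  have hinj : f false ≠ f true := by
    intro h
    have := congrFun h z
    rw [hfz, hfz] at this
    simpa using this
  refine ⟨{f false, f true}, fun b => (b z).getD false, ⟨?_, ?_, ?_⟩, ?_⟩
  · rw [Finset.card_pair hinj]; norm_num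
  · intro a ha
    have : ∀ c, IsFaceCode m 1 (f c) := by
      intro c
      unfold IsFaceCode
      have : (Finset.univ.filter fun i => f c i ≠ none) = {z} := by
        ext i
        simp only [Finset.mem_filter, Finset.mem_univ, true_and, Finset.mem_singleton]
        constructor
        · intro hi
          by_contra hne
          exact hi (hfne c i (fun h0 => hne (Fin.ext h0)))
        · intro hi; subst hi; rw [hfz]; simp
      rw [this]; rfl
    rcases Finset.mem_insert.1 ha with h | h
    · subst h; exact this false
    · rw [Finset.mem_singleton.1 h]; exact this true
  · intro x
    refine ⟨f (x z), ⟨?_, ?_⟩, ?_⟩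
    · rcases Bool.dichotomy (x z) with h | h <;> rw [h] <;> simp
    · intro i b hib
      by_cases h0 : (i : ℕ) = 0
      · have : i = z := Fin.ext h0
        subst this
        rw [hfz] at hib
        exact (Option.some_inj.mp hib).symm ▸ rfl
      · rw [hfne _ _ h0] at hib; exact absurd hib (by simp)
    · rintro b ⟨hbA, hbx⟩
      have key : ∀ c, b = f c → b = f (x z) := by
        intro c hc
        have : x z = c := hbx z c (by rw [hc, hfz])
        rw [this, hc]
      rcases Finset.mem_insert.1 hbA with h | h
      · exact key false h
      · exact key true (Finset.mem_singleton.1 h)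
  · intro a ha b hb hab _
    have hval : ∀ c, ((f c) z).getD false = c := by intro c; rw [hfz]; rfl
    simp only [Finset.mem_insert, Finset.mem_singleton] at ha hb
    rcases ha with h | h <;> rcases hb with h' | h' <;> subst h <;> subst h' <;>
      first
        | exact absurd rfl hab
        | (show ((f _) z).getD false ≠ ((f _) z).getD false
           rw [hval, hval]; simp)
  

def ext2 {n : ℕ} (a : Fin n → Option Bool) (o : Bool) (c : Bool) :
    Fin (n + 2) → Option Bool :=
  fun i => if h : (i : ℕ) < n then a ⟨i, h⟩
    else if (i : ℕ) = n + (cond o 1 0) then some c else none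

def npos (n : ℕ) (o : Bool) : Fin (n + 2) := ⟨n + cond o 1 0, by cases o <;> simp <;> omega⟩

lemma ext2_cast {n : ℕ} (a : Fin n → Option Bool) (o c : Bool) (i : Fin n) :
    ext2 a o c (Fin.castAdd 2 i) = a i := by
  have h : ((Fin.castAdd 2 i : Fin (n+2)) : ℕ) < n := i.isLt
  simp only [ext2, dif_pos h]
  congr 1

lemma ext2_npos {n : ℕ} (a : Fin n → Option Bool) (o c : Bool) :
    ext2 a o c (npos n o) = some c := by
  have h : ¬ ((npos n o : Fin (n+2)) : ℕ) < n := by cases o <;> simp [npos]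
  simp [ext2, h, npos]

lemma ext2_other {n : ℕ} (a : Fin n → Option Bool) (o c : Bool) :
    ext2 a o c (npos n (!o)) = none := by
  have h : ¬ ((npos n (!o) : Fin (n+2)) : ℕ) < n := by cases o <;> simp [npos]
  cases o <;> simp [ext2, h, npos]

lemma ext2_inj {n : ℕ} (a a' : Fin n → Option Bool) (o o' c c' : Bool)
    (h : ext2 a o c = ext2 a' o' c') : a = a' ∧ (o = o' → c = c') := by
  constructor
  · funext i
    rw [← ext2_cast a o c i, ← ext2_cast a' o' c' i, h]
  · intro ho
    subst ho
    have := congrFun h (npos n o)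
    rw [ext2_npos, ext2_npos] at this
    exact Option.some_inj.mp this

lemma mem_faceSet_ext2 {n : ℕ} (a : Fin n → Option Bool) (o c : Bool)
    (x : Fin (n+2) → Bool) :
    x ∈ faceSet (ext2 a o c) ↔
      ((fun i => x (Fin.castAdd 2 i)) ∈ faceSet a ∧ x (npos n o) = c) := by
  constructor
  · intro hx
    refine ⟨fun i b hib => hx (Fin.castAdd 2 i) b (by rw [ext2_cast]; exact hib), ?_⟩
    exact hx (npos n o) c (ext2_npos a o c)
  · rintro ⟨hx, hc⟩ i b hib
    by_cases h : (i : ℕ) < n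
    · have hi : i = Fin.castAdd 2 ⟨(i : ℕ), h⟩ := by apply Fin.ext; simp
      rw [hi] at hib ⊢
      rw [ext2_cast] at hib
      exact hx _ b hib
    · have h2 : (i : ℕ) = n + cond o 1 0 := by
        by_contra h3
        simp [ext2, h, h3] at hib
      have hi : i = npos n o := by apply Fin.ext; simpa [npos] using h2
      subst hi
      rw [ext2_npos] at hib
      rw [hc]
      exact Option.some_inj.mp hib

def sig2 (n : ℕ) : (Fin (n+2) → Option Bool) → Bool := fun b =>
  match b ⟨n, by omega⟩ with
  | some c => c
  | none => (b ⟨n+1, by omega⟩).getD false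

lemma sig2_ext2 {n : ℕ} (a : Fin n → Option Bool) (o c : Bool) :
    sig2 n (ext2 a o c) = c := by
  have h0 : (⟨n, by omega⟩ : Fin (n+2)) = npos n false := by apply Fin.ext; simp [npos]
  have h1 : (⟨n+1, by omega⟩ : Fin (n+2)) = npos n true := by apply Fin.ext; simp [npos]
  cases o
  · rw [sig2, h0, ext2_npos]
  · rw [sig2, h0, h1]
    rw [show (false = !true) from rfl, ext2_other, ext2_npos]
    rfl

lemma ext2_npos_none_iff {n : ℕ} (a : Fin n → Option Bool) (o c : Bool) (o' : Bool) :
    ext2 a o c (npos n o') = none ↔ o ≠ o' := by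
  cases o <;> cases o' <;> simp [ext2, npos]

lemma step (n k : ℕ) (hg : GoodS n k) : GoodS (n+2) (k+1) := by
  obtain ⟨A, σ, ⟨hcard, hface, hcover⟩, hsep⟩ := hg
  set ch : (Fin n → Option Bool) × Bool → (Fin (n+2) → Option Bool) :=
    fun p => ext2 p.1 (σ p.1) p.2 with hch
  set A' : Finset (Fin (n+2) → Option Bool) :=
    (A ×ˢ (Finset.univ : Finset Bool)).image ch with hA'
  have hmem : ∀ b, b ∈ A' ↔ ∃ a ∈ A, ∃ c, b = ext2 a (σ a) c := by
    intro b
    simp only [hA', Finset.mem_image, Finset.mem_product, Finset.mem_univ, and_true, hch,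
      Prod.exists]
    constructor
    · rintro ⟨a, c, ha, rfl⟩; exact ⟨a, ha, c, rfl⟩
    · rintro ⟨a, ha, c, rfl⟩; exact ⟨a, c, ha, rfl⟩
  refine ⟨A', sig2 n, ⟨?_, ?_, ?_⟩, ?_⟩
  · rw [hA', Finset.card_image_of_injOn, Finset.card_product, hcard]
    · simp [pow_succ]
    · rintro ⟨a, c⟩ - ⟨a', c'⟩ - hcc
      obtain ⟨h1, h2⟩ := ext2_inj _ _ _ _ _ _ hcc
      have : c = c' := h2 (by rw [h1])
      simp_all
  · intro b hb
    obtain ⟨a, ha, c, rfl⟩ := (hmem b).1 hb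
    unfold IsFaceCode
    rw [Finset.card_filter, Fin.sum_univ_add]
    have e1 : ∀ i : Fin n,
        (if ext2 a (σ a) c (Fin.castAdd 2 i) ≠ none then 1 else 0) =
          (if a i ≠ none then 1 else 0) := by
      intro i; simp only [ext2_cast]
    have e2 : (∑ i : Fin n, if ext2 a (σ a) c (Fin.castAdd 2 i) ≠ none then 1 else 0) = k := by
      rw [Finset.sum_congr rfl (fun i _ => e1 i), ← Finset.card_filter]
      exact hface a ha
    have e3 : (∑ i : Fin 2, if ext2 a (σ a) c (Fin.natAdd n i) ≠ none then 1 else 0) = 1 := by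
      rw [Fin.sum_univ_two]
      have hn0 : (Fin.natAdd n (0 : Fin 2)) = npos n false := by apply Fin.ext; simp [npos]
      have hn1 : (Fin.natAdd n (1 : Fin 2)) = npos n true := by apply Fin.ext; simp [npos]
      rw [hn0, hn1]
      cases hσ : σ a
      · rw [ext2_npos, show (true = !false) from rfl, ext2_other]; simp
      · rw [ext2_npos, show (false = !true) from rfl, ext2_other]; simp
    omega
  · intro x
    obtain ⟨a, ⟨haA, hax⟩, huniq⟩ := hcover (fun i => x (Fin.castAdd 2 i))
    refine ⟨ext2 a (σ a) (x (npos n (σ a))), ⟨(hmem _).2 ⟨a, haA, _, rfl⟩, ?_⟩, ?_⟩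
    · rw [mem_faceSet_ext2]; exact ⟨hax, rfl⟩
    · rintro b ⟨hbA, hbx⟩
      obtain ⟨a', ha', c', rfl⟩ := (hmem b).1 hbA
      rw [mem_faceSet_ext2] at hbx
      obtain ⟨hx', hc'⟩ := hbx
      have : a' = a := huniq a' ⟨ha', hx'⟩
      subst this
      rw [hc']
  · intro b hb b' hb' hne hpar
    obtain ⟨a, ha, c, rfl⟩ := (hmem b).1 hb
    obtain ⟨a', ha', c', rfl⟩ := (hmem b').1 hb'
    have hpa : a = a' := by
      by_contra hne'
      have hσ := hsep a ha a' ha' hne' (by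
        intro i
        have := hpar (Fin.castAdd 2 i)
        rwa [ext2_cast, ext2_cast] at this)
      have := hpar (npos n (σ a))
      rw [ext2_npos_none_iff, ext2_npos_none_iff] at this
      simp only [ne_eq, not_true_eq_false, false_iff, not_not] at this
      exact hσ this.symm
    subst hpa
    have hcc : c ≠ c' := by rintro rfl; exact hne rfl
    rw [sig2_ext2, sig2_ext2]
    exact hcc

instance decMemFaceSet {n : ℕ} (a : Fin n → Option Bool) (x : Fin n → Bool) :
    Decidable (x ∈ faceSet a) :=
  decidable_of_iff (∀ i b, a i = some b → x i = b) Iff.rfl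

instance decFaceCode {n k : ℕ} (a : Fin n → Option Bool) : Decidable (IsFaceCode n k a) := by
  unfold IsFaceCode; infer_instance

instance decParallel {n : ℕ} (a b : Fin n → Option Bool) : Decidable (IsParallel a b) := by
  unfold IsParallel; infer_instance

instance decExU {α : Type*} [DecidableEq α] [Fintype α] (p : α → Prop) [DecidablePred p] :
    Decidable (∃! x, p x) :=
  decidable_of_iff (∃ x, p x ∧ ∀ y, p y → y = x) Iff.rfl

def B43 : Finset (Fin 4 → Option Bool) :=
  { ![none, some false, some false, some false],
    ![none, some true, some true, some true],
    ![some false, none, some true, some false],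
    ![some true, none, some false, some true],
    ![some true, some true, none, some false],
    ![some false, some false, none, some true],
    ![some false, some true, some false, none],
    ![some true, some false, some true, none] }

def sigB43 : (Fin 4 → Option Bool) → Bool := fun b =>
  decide (b ∈ ({ ![none, some true, some true, some true],
    ![some true, none, some false, some true],
    ![some false, some false, none, some true],
    ![some true, some false, some true, none] } : Finset (Fin 4 → Option Bool)))

set_option maxRecDepth 10000 in
lemma base2 : GoodS 4 3 := by
  refine ⟨B43, sigB43, ⟨?_, ?_, ?_⟩, ?_⟩
  · decide
  · decide
  · decide
  · decide


lemma iterStep (t n k : ℕ) (h : GoodS n k) : GoodS (n + 2 * t) (k + t) := by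
  induction t with
  | zero => simpa using h
  | succ t ih =>
    have h2 := step _ _ ih
    rw [show n + 2 * (t + 1) = n + 2 * t + 2 from by ring,
        show k + (t + 1) = k + t + 1 from rfl]
    exact h2

lemma goodS_of (n k : ℕ) (hk : 0 < k) (hkn : k < n) (h : 2 * k ≤ n + 2) : GoodS n k := by
  by_cases hc : 2 * k ≤ n + 1
  · have hm : 0 < n - 2 * (k - 1) := by omega
    have h1 := iterStep (k - 1) _ _ (base1 (n - 2 * (k - 1)) hm)
    rw [show n - 2 * (k - 1) + 2 * (k - 1) = n from by omega,
        show 1 + (k - 1) = k from by omega] at h1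
    exact h1
  · have hk3 : 3 ≤ k := by omega
    have h1 := iterStep (k - 3) _ _ base2
    rw [show 4 + 2 * (k - 3) = n from by omega,
        show 3 + (k - 3) = k from by omega] at h1
    exact h1

theorem stmt5 (n k : ℕ) (hk : 0 < k) (hkn : k < n) (h : 2 * k ≤ n + 2) :
    ∃ A : Finset (Fin n → Option Bool), IsSplitting n k A ∧
      ∀ s : Finset (Fin n),
        (A.filter fun a => ∀ i, a i = none ↔ i ∈ s).card ≤ 2 := by
  obtain ⟨A, σ, hsplit, hsep⟩ := goodS_of n k hk hkn h
  refine ⟨A, hsplit, fun s => ?_⟩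
  have hinj : Set.InjOn σ (A.filter fun a => ∀ i, a i = none ↔ i ∈ s) := by
    intro a ha b hb hσ
    simp only [Finset.coe_filter, Set.mem_setOf_eq] at ha hb
    by_contra hne
    exact hsep a ha.1 b hb.1 hne (fun i => (ha.2 i).trans (hb.2 i).symm) hσ
  have hle := Finset.card_le_card_of_injOn
      (s := A.filter fun a => ∀ i, a i = none ↔ i ∈ s)
      (t := (Finset.univ : Finset Bool)) σ (fun a _ => Finset.mem_univ _) hinj
  simpa using hle
end

section
/- Every k-uniform hypergraph with fewer than 2^(k-1) edges is 2-DP-colorable. -/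
open Finset

lemma count_matching {V : Type} [Fintype V] [DecidableEq V] (s : Finset V) (g : V → Bool) :
    (Finset.univ.filter (fun f : V → Bool => ∀ v ∈ s, f v = g v)).card
      = 2 ^ (Fintype.card V - s.card) := by
  have hc : Fintype.card {f : V → Bool // ∀ v ∈ s, f v = g v}
      = (Finset.univ.filter (fun f : V → Bool => ∀ v ∈ s, f v = g v)).card :=
    Fintype.card_subtype _
  rw [← hc]
  have e : {f : V → Bool // ∀ v ∈ s, f v = g v} ≃ ({v // v ∈ sᶜ} → Bool) :=
    { toFun := fun f v => f.1 v.1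
      invFun := fun h => ⟨fun v => if hv : v ∈ s then g v else h ⟨v, by simpa using hv⟩,
        fun v hv => dif_pos hv⟩
      left_inv := by
        intro f
        apply Subtype.ext
        funext v
        by_cases hv : v ∈ s
        · simp [hv, (f.2 v hv).symm]
        · simp [hv]
      right_inv := by
        intro h
        funext v
        have hv : v.1 ∉ s := Finset.mem_compl.mp v.2
        simp [hv] }
  rw [Fintype.card_congr e]
  simp [Finset.card_compl]

/-- Every `k`-uniform hypergraph with fewer than `2^(k-1)` edges is
2-DP-colorable: for every cover assignment `Φ` (assigning to each edge a
2-coloring of it, considered together with its pointwise complement) there is a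
2-coloring of the vertices whose restriction to each edge `e` differs from both
`Φ e` and its complement. -/
theorem stmt6 {V : Type} [Fintype V] [DecidableEq V] (k : ℕ)
    (E : Finset (Finset V)) (huniform : ∀ e ∈ E, e.card = k)
    (hcard : E.card < 2 ^ (k - 1))
    (Φ : Finset V → V → Bool) :
    ∃ f : V → Bool, ∀ e ∈ E,
      (∃ v ∈ e, f v ≠ Φ e v) ∧ (∃ v ∈ e, f v ≠ !(Φ e v)) := by
  rcases E.eq_empty_or_nonempty with rfl | ⟨e₀, he₀⟩
  · exact ⟨fun _ => true, fun e he => absurd he (by simp)⟩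
  have hk : 1 ≤ k := by
    by_contra h
    push_neg at h
    interval_cases k
    · have : E.card < 1 := by simpa using hcard
      simp [Finset.card_eq_zero] at this
      subst this
      exact absurd he₀ (by simp)
  have hkn : k ≤ Fintype.card V := by
    rw [← huniform e₀ he₀]
    exact Finset.card_le_card (Finset.subset_univ e₀) |>.trans (by simp)
  set n := Fintype.card V with hn
  set bad := fun e : Finset V =>
    (Finset.univ.filter (fun f : V → Bool => ∀ v ∈ e, f v = Φ e v)) ∪
    (Finset.univ.filter (fun f : V → Bool => ∀ v ∈ e, f v = !(Φ e v))) with hbad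
  have hbadcard : ∀ e ∈ E, (bad e).card ≤ 2 * 2 ^ (n - k) := by
    intro e he
    calc (bad e).card ≤ _ + _ := Finset.card_union_le _ _
      _ = 2 * 2 ^ (n - k) := by
          rw [count_matching, count_matching, huniform e he]; ring
  have htotal : (E.biUnion bad).card < 2 ^ n := by
    calc (E.biUnion bad).card ≤ ∑ e ∈ E, (bad e).card := Finset.card_biUnion_le
      _ ≤ ∑ e ∈ E, 2 * 2 ^ (n - k) := Finset.sum_le_sum hbadcard
      _ = E.card * (2 * 2 ^ (n - k)) := by rw [Finset.sum_const, smul_eq_mul]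
      _ < 2 ^ (k - 1) * (2 * 2 ^ (n - k)) := by
          apply Nat.mul_lt_mul_of_lt_of_le hcard le_rfl
          positivity
      _ = 2 ^ n := by
          rw [← pow_succ', ← pow_add]
          congr 1
          omega
  have : (E.biUnion bad) ≠ Finset.univ := by
    intro h
    rw [h, Finset.card_univ] at htotal
    have hcf : Fintype.card (V → Bool) = 2 ^ n := by
      rw [Fintype.card_fun]; simp [hn]
    omega
  obtain ⟨f, hf⟩ : ∃ f : V → Bool, f ∉ E.biUnion bad := by
    by_contra h
    push_neg at h
    exact this (Finset.eq_univ_iff_forall.mpr fun f => h f)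
  refine ⟨f, fun e he => ?_⟩
  rw [Finset.mem_biUnion] at hf
  push_neg at hf
  have := hf e he
  rw [hbad, Finset.mem_union, Finset.mem_filter, Finset.mem_filter] at this
  push_neg at this
  obtain ⟨h1, h2⟩ := this
  constructor
  · obtain ⟨v, hv, hne⟩ := h1 (Finset.mem_univ f)
    exact ⟨v, hv, hne⟩
  · obtain ⟨v, hv, hne⟩ := h2 (Finset.mem_univ f)
    exact ⟨v, hv, hne⟩
end

section
/- A k-uniform hypergraph with n vertices and ℓ edges is non-2-DP-colorable if and only if there exists an assignment to each edge e (a k-subset of coordinates) of a pair of antipodal (n-k)-faces of {0,1}^n with asterisks exactly in the coordinates outside e, such that the union of all these 2ℓ faces covers {0,1}^n. -/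
/-- The `(n-k)`-face of `{0,1}^n` whose fixed coordinates are exactly the
coordinates in the edge `e`, with values given by `φ`. -/
def edgeFace {n : ℕ} (e : Finset (Fin n)) (φ : Fin n → Bool) :
    Fin n → Option Bool :=
  fun i => if i ∈ e then some (φ i) else none

lemma hface' {n : ℕ} (e : Finset (Fin n)) (φ : Fin n → Bool) (x : Fin n → Bool) :
    x ∈ faceSet (edgeFace e φ) ↔ ∀ v ∈ e, x v = φ v := by
  constructor
  · intro h v hv
    exact h v (φ v) (by simp [edgeFace, hv])
  · intro h i b hb
    by_cases hi : i ∈ e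
    · simp [edgeFace, hi] at hb
      rw [h i hi, hb]
    · simp [edgeFace, hi] at hb

/-- A `k`-uniform hypergraph on vertex set `Fin n` with edge set `E` is
non-2-DP-colorable iff one can assign to each edge `e` a pair of antipodal
`(n-k)`-faces with asterisks exactly outside `e` whose union over all edges
covers the whole hypercube. -/
theorem stmt7 (n k : ℕ) (E : Finset (Finset (Fin n)))
    (huniform : ∀ e ∈ E, e.card = k) :
    (¬ ∀ Φ : Finset (Fin n) → (Fin n → Bool), ∃ f : Fin n → Bool, ∀ e ∈ E,
        (∃ v ∈ e, f v ≠ Φ e v) ∧ (∃ v ∈ e, f v ≠ !(Φ e v))) ↔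
      ∃ c : Finset (Fin n) → (Fin n → Bool), ∀ x : Fin n → Bool, ∃ e ∈ E,
        x ∈ faceSet (edgeFace e (c e)) ∨
          x ∈ faceSet (edgeFace e (fun i => !(c e i))) := by
  push_neg
  constructor
  · rintro ⟨Φ, hΦ⟩
    refine ⟨Φ, fun x => ?_⟩
    obtain ⟨e, he, h⟩ := hΦ x
    refine ⟨e, he, ?_⟩
    by_cases hA : ∃ v ∈ e, x v ≠ Φ e v
    · right
      rw [hface']
      exact h hA
    · left
      rw [hface']
      intro v hv
      by_contra hc
      exact hA ⟨v, hv, hc⟩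
  · rintro ⟨c, hc⟩
    refine ⟨c, fun f => ?_⟩
    obtain ⟨e, he, h⟩ := hc f
    refine ⟨e, he, ?_⟩
    rcases h with h | h
    · rintro ⟨v, hv, hne⟩
      exact absurd ((hface' _ _ _).1 h v hv) hne
    · intro _
      exact fun v hv => (hface' _ _ _).1 h v hv
end

section
/- Every k-uniform hypergraph with at most s^(k-1) edges admits a proper s-coloring (a coloring of the vertices with s colors such that no edge is monochromatic). -/
/-- Every `k`-uniform hypergraph (`k ≥ 2`) with at most `s^(k-1)` edges admits
a proper `s`-coloring (`s ≥ 2`): a coloring of the vertices with `s` colors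
such that no edge is monochromatic. -/
theorem stmt8 {V : Type} [Fintype V] [DecidableEq V] (k s : ℕ)
    (hk : 2 ≤ k) (hs : 2 ≤ s)
    (E : Finset (Finset V)) (huniform : ∀ e ∈ E, e.card = k)
    (hcard : E.card ≤ s ^ (k - 1)) :
    ∃ f : V → Fin s, ∀ e ∈ E, ∃ v ∈ e, ∃ w ∈ e, f v ≠ f w := by
  classical
  rcases E.eq_empty_or_nonempty with rfl | ⟨e₀, he₀⟩
  · exact ⟨fun _ => ⟨0, by omega⟩, by simp⟩
  set n := Fintype.card V with hn
  have hkn : k ≤ n := by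
    have h1 := Finset.card_le_card (Finset.subset_univ e₀)
    rw [huniform e₀ he₀, Finset.card_univ] at h1
    exact h1
  have hV : Nonempty V := by
    have h0 : 0 < e₀.card := by rw [huniform e₀ he₀]; omega
    obtain ⟨v, hv⟩ := Finset.card_pos.mp h0
    exact ⟨v⟩
  set A : Finset V → Finset (V → Fin s) :=
    fun e => Finset.univ.filter (fun f => ∀ v ∈ e, ∀ w ∈ e, f v = f w) with hAdef
  have hA : ∀ e ∈ E, (A e).card ≤ s ^ (n - k + 1) := by
    intro e he
    have hek : e.card = k := huniform e he
    have h0 : 0 < e.card := by omega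
    obtain ⟨v₀, hv₀⟩ := Finset.card_pos.mp h0
    have hle : (A e).card ≤
        (Finset.univ : Finset (Fin s × ({x : V // x ∉ e} → Fin s))).card := by
      apply Finset.card_le_card_of_injOn (fun f => (f v₀, fun x => f x.1))
        (fun _ _ => Finset.mem_univ _)
      intro f hf g hg hfg
      simp only [hAdef, Finset.coe_filter, Set.mem_setOf_eq, Finset.mem_univ,
        true_and] at hf hg
      simp only [Prod.mk.injEq] at hfg
      funext x
      by_cases hx : x ∈ e
      · calc f x = f v₀ := hf x hx v₀ hv₀
          _ = g v₀ := hfg.1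
          _ = g x := (hg x hx v₀ hv₀).symm
      · exact congrFun hfg.2 ⟨x, hx⟩
    have hcardc : (Finset.univ : Finset (Fin s × ({x : V // x ∉ e} → Fin s))).card
        = s ^ (n - k + 1) := by
      rw [Finset.card_univ, Fintype.card_prod, Fintype.card_fun, Fintype.card_fin]
      have : Fintype.card {x : V // x ∉ e} = n - k := by
        rw [Fintype.card_subtype_compl]
        congr 1
        rw [Fintype.card_coe]
        exact hek
      rw [this, pow_succ, mul_comm]
    omega
  set C : Finset (V → Fin s) := Finset.univ.image (fun c : Fin s => (fun _ => c)) with hCdef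
  have hCcard : C.card = s := by
    rw [hCdef, Finset.card_image_of_injective _ (fun a b h => ?_), Finset.card_univ,
      Fintype.card_fin]
    obtain ⟨v⟩ := hV
    exact congrFun h v
  have hCA : ∀ e, C ⊆ A e := by
    intro e f hf
    rw [hCdef] at hf
    simp only [Finset.mem_image, Finset.mem_univ, true_and] at hf
    obtain ⟨c, rfl⟩ := hf
    simp [hAdef]
  set Bad : Finset (V → Fin s) :=
    Finset.univ.filter (fun f => ∃ e ∈ E, ∀ v ∈ e, ∀ w ∈ e, f v = f w) with hBdef
  have hCBad : C ⊆ Bad := by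
    intro f hf
    rw [hCdef] at hf
    simp only [Finset.mem_image, Finset.mem_univ, true_and] at hf
    obtain ⟨c, rfl⟩ := hf
    simp only [hBdef, Finset.mem_filter, Finset.mem_univ, true_and]
    exact ⟨e₀, he₀, by simp⟩
  have hBadsub : Bad \ C ⊆ E.biUnion (fun e => A e \ C) := by
    intro f hf
    rw [Finset.mem_sdiff] at hf
    obtain ⟨hfB, hfC⟩ := hf
    simp only [hBdef, Finset.mem_filter, Finset.mem_univ, true_and] at hfB
    obtain ⟨e, he, hmono⟩ := hfB
    refine Finset.mem_biUnion.mpr ⟨e, he, ?_⟩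
    rw [Finset.mem_sdiff]
    refine ⟨?_, hfC⟩
    simp only [hAdef, Finset.mem_filter, Finset.mem_univ, true_and]
    exact hmono
  have h1 : (Bad \ C).card ≤ E.card * (s ^ (n - k + 1) - s) := by
    calc (Bad \ C).card ≤ (E.biUnion (fun e => A e \ C)).card :=
          Finset.card_le_card hBadsub
      _ ≤ ∑ e ∈ E, (A e \ C).card := Finset.card_biUnion_le
      _ ≤ ∑ _e ∈ E, (s ^ (n - k + 1) - s) := by
          refine Finset.sum_le_sum (fun e he => ?_)
          rw [Finset.card_sdiff_of_subset (hCA e), hCcard]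
          exact Nat.sub_le_sub_right (hA e he) s
      _ = E.card * (s ^ (n - k + 1) - s) := by
          rw [Finset.sum_const, smul_eq_mul]
  have hBadcard : Bad.card ≤ s + E.card * (s ^ (n - k + 1) - s) := by
    have h2 := Finset.card_sdiff_add_card_eq_card hCBad
    omega
  have hsk : s < s ^ k := by
    calc s < s * s := by nlinarith
      _ = s ^ 2 := (sq s).symm
      _ ≤ s ^ k := Nat.pow_le_pow_right (by omega) hk
  have hskn : s ^ k ≤ s ^ n := Nat.pow_le_pow_right (by omega) hkn
  have hse : s ≤ s ^ (n - k + 1) := by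
    calc s = s ^ 1 := (pow_one s).symm
      _ ≤ s ^ (n - k + 1) := Nat.pow_le_pow_right (by omega) (by omega)
  have key : E.card * (s ^ (n - k + 1) - s) ≤ s ^ n - s ^ k := by
    calc E.card * (s ^ (n - k + 1) - s) ≤ s ^ (k - 1) * (s ^ (n - k + 1) - s) :=
          Nat.mul_le_mul_right _ hcard
      _ = s ^ (k - 1) * s ^ (n - k + 1) - s ^ (k - 1) * s := by rw [Nat.mul_sub]
      _ = s ^ n - s ^ k := by
          rw [← pow_add, ← pow_succ]
          congr 2 <;> omega
  have hsub : s ^ n - s ^ k + s ^ k = s ^ n := Nat.sub_add_cancel hskn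
  have hBadlt : Bad.card < s ^ n := by omega
  have hex : ∃ f : V → Fin s, f ∉ Bad := by
    by_contra h
    push_neg at h
    have hsubs : (Finset.univ : Finset (V → Fin s)) ⊆ Bad := fun f _ => h f
    have h3 := Finset.card_le_card hsubs
    rw [Finset.card_univ, Fintype.card_fun, Fintype.card_fin, ← hn] at h3
    omega
  obtain ⟨f, hf⟩ := hex
  refine ⟨f, fun e he => ?_⟩
  simp only [hBdef, Finset.mem_filter, Finset.mem_univ, true_and] at hf
  push_neg at hf
  exact hf e he
end

section
/- Every nonempty k-unitrade U satisfies |U| ≥ k+1, and if |U| = k+1 then U is the set of all k-element subsets of some (k+1)-element set. -/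
/-- A `k`-unitrade over `V`: a collection of `k`-element subsets (blocks) of `V`
such that every `(k-1)`-element subset of `V` is contained in an even number of
blocks. -/
def IsUnitrade {V : Type*} [DecidableEq V] (k : ℕ) (U : Finset (Finset V)) : Prop :=
  (∀ u ∈ U, u.card = k) ∧
    ∀ w : Finset V, w.card + 1 = k → Even ((U.filter fun u => w ⊆ u).card)

/-- Every nonempty `k`-unitrade has at least `k+1` blocks, and in case of
equality it consists of all `k`-element subsets of some `(k+1)`-element set. -/
theorem stmt11 {V : Type*} [DecidableEq V] (k : ℕ) (hk : 1 ≤ k)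
    (U : Finset (Finset V)) (hU : IsUnitrade k U) (hne : U.Nonempty) :
    k + 1 ≤ U.card ∧
      (U.card = k + 1 →
        ∃ S : Finset V, S.card = k + 1 ∧ U = S.powersetCard k) := by
  obtain ⟨hcard, hpar⟩ := hU
  obtain ⟨u, hu⟩ := hne
  have huk : u.card = k := hcard u hu
  have key : ∀ x ∈ u, ∃ v, (v ∈ U ∧ v ≠ u) ∧ ∃ y, y ∉ u ∧ v = insert y (u.erase x) := by
    intro x hx
    have hw : (u.erase x).card + 1 = k := by
      rw [Finset.card_erase_of_mem hx, huk]; omega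
    have heven := hpar (u.erase x) hw
    have humem : u ∈ U.filter fun v => u.erase x ⊆ v := by
      simp [Finset.mem_filter, hu, Finset.erase_subset]
    have h1 : 1 < (U.filter fun v => u.erase x ⊆ v).card := by
      rcases heven with ⟨m, hm⟩
      have : 0 < (U.filter fun v => u.erase x ⊆ v).card := Finset.card_pos.2 ⟨u, humem⟩
      omega
    obtain ⟨v, hvmem, hvne⟩ := Finset.exists_mem_ne h1 u
    rw [Finset.mem_filter] at hvmem
    obtain ⟨hvU, hvsub⟩ := hvmem
    have hvk : v.card = k := hcard v hvU
    have hsd : (v \ u.erase x).card = 1 := by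
      rw [Finset.card_sdiff_of_subset hvsub, hvk, Finset.card_erase_of_mem hx, huk]; omega
    obtain ⟨y, hy⟩ := Finset.card_eq_one.1 hsd
    have hv : v = insert y (u.erase x) := by
      have h2 := Finset.sdiff_union_of_subset hvsub
      rw [hy] at h2
      rw [← h2, Finset.insert_eq]
    refine ⟨v, ⟨hvU, hvne⟩, y, ?_, hv⟩
    intro hyu
    have hynot : y ∉ u.erase x := by
      have : y ∈ v \ u.erase x := by rw [hy]; exact Finset.mem_singleton_self y
      exact (Finset.mem_sdiff.1 this).2
    have hyx : y = x := by
      by_contra h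
      exact hynot (Finset.mem_erase.2 ⟨h, hyu⟩)
    apply hvne
    rw [hv, hyx, Finset.insert_erase hx]
  choose! F hF Y hY hFY using key
  have hxF : ∀ x ∈ u, x ∉ F x := by
    intro x hx hmem
    rw [hFY x hx, Finset.mem_insert] at hmem
    rcases hmem with h | h
    · exact hY x hx (h ▸ hx)
    · exact (Finset.mem_erase.1 h).1 rfl
  have hmemF : ∀ x ∈ u, ∀ z ∈ u, z ≠ x → z ∈ F x := by
    intro x hx z hz hzx
    rw [hFY x hx]
    exact Finset.mem_insert_of_mem (Finset.mem_erase.2 ⟨hzx, hz⟩)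
  have hinj : Set.InjOn F u := by
    intro a ha b hb hab
    by_contra h
    have hb' : b ∈ F a := hmemF a ha b hb (fun e => h e.symm)
    rw [hab] at hb'
    exact hxF b hb hb'
  set T := insert u (u.image F) with hT
  have hTU : T ⊆ U := by
    intro v hv
    rw [hT, Finset.mem_insert] at hv
    rcases hv with rfl | hv
    · exact hu
    · obtain ⟨x, hx, rfl⟩ := Finset.mem_image.1 hv
      exact (hF x hx).1
  have hunotim : u ∉ u.image F := by
    intro h
    obtain ⟨x, hx, hfx⟩ := Finset.mem_image.1 h
    exact hxF x hx (by rw [hfx]; exact hx)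
  have hTcard : T.card = k + 1 := by
    rw [hT, Finset.card_insert_of_notMem hunotim,
      Finset.card_image_of_injOn hinj, huk]
  have hle : k + 1 ≤ U.card := hTcard ▸ Finset.card_le_card hTU
  refine ⟨hle, fun hUcard => ?_⟩
  have hTeq : U = T := (Finset.eq_of_subset_of_card_le hTU
    (le_of_eq (by rw [hUcard, hTcard]))).symm
  have hYeq : ∀ x ∈ u, ∀ x' ∈ u, Y x = Y x' := by
    intro x hx x' hx'
    by_contra hne'
    have hxx' : x ≠ x' := by rintro rfl; exact hne' rfl
    set w := insert (Y x) ((u.erase x).erase x') with hwdef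
    have hx'e : x' ∈ u.erase x := Finset.mem_erase.2 ⟨fun e => hxx' e.symm, hx'⟩
    have hk2 : 2 ≤ k := by
      have := Finset.one_lt_card.2 ⟨x, hx, x', hx', hxx'⟩
      omega
    have hwcard : w.card + 1 = k := by
      have hY1 : Y x ∉ (u.erase x).erase x' := fun h =>
        hY x hx (Finset.mem_of_mem_erase (Finset.mem_of_mem_erase h))
      rw [hwdef, Finset.card_insert_of_notMem hY1,
        Finset.card_erase_of_mem hx'e, Finset.card_erase_of_mem hx, huk]
      omega
    have heven := hpar w hwcard
    have hfilter : (U.filter fun v => w ⊆ v) = {F x} := by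
      ext v
      simp only [Finset.mem_filter, Finset.mem_singleton]
      constructor
      · rintro ⟨hvU, hwv⟩
        rw [hTeq, hT, Finset.mem_insert, Finset.mem_image] at hvU
        rcases hvU with rfl | ⟨z, hz, rfl⟩
        · exact absurd (hwv (Finset.mem_insert_self _ _)) (hY x hx)
        · by_cases hzx : z = x
          · rw [hzx]
          · by_cases hzx' : z = x'
            · subst hzx'
              have hYm : Y x ∈ F z := hwv (Finset.mem_insert_self _ _)
              rw [hFY z hz, Finset.mem_insert] at hYm
              rcases hYm with h | h
              · exact absurd h hne'
              · exact absurd (Finset.mem_of_mem_erase h) (hY x hx)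
            · have hzw : z ∈ w := by
                rw [hwdef]
                exact Finset.mem_insert_of_mem (Finset.mem_erase.2 ⟨hzx',
                  Finset.mem_erase.2 ⟨hzx, hz⟩⟩)
              exact absurd (hwv hzw) (hxF z hz)
      · rintro rfl
        refine ⟨(hF x hx).1, ?_⟩
        rw [hwdef, hFY x hx]
        exact Finset.insert_subset_insert _ (Finset.erase_subset _ _)
    rw [hfilter] at heven
    simp at heven
  obtain ⟨x0, hx0⟩ := Finset.card_pos.1 (by omega : 0 < u.card)
  set S := insert (Y x0) u with hS
  have hScard : S.card = k + 1 := by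
    rw [hS, Finset.card_insert_of_notMem (hY x0 hx0), huk]
  refine ⟨S, hScard, ?_⟩
  have hsub : U ⊆ S.powersetCard k := by
    intro v hv
    rw [Finset.mem_powersetCard]
    refine ⟨?_, hcard v hv⟩
    rw [hTeq, hT, Finset.mem_insert, Finset.mem_image] at hv
    rcases hv with rfl | ⟨z, hz, rfl⟩
    · exact Finset.subset_insert _ _
    · rw [hFY z hz, hS]
      apply Finset.insert_subset
      · rw [hYeq z hz x0 hx0]; exact Finset.mem_insert_self _ _
      · exact (Finset.erase_subset _ _).trans (Finset.subset_insert _ _)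
  have hPcard : (S.powersetCard k).card = k + 1 := by
    rw [Finset.card_powersetCard, hScard, Nat.choose_succ_self_right]
  exact Finset.eq_of_subset_of_card_le hsub (le_of_eq (by rw [hPcard, hUcard]))
end

section
/- If U is a k-unitrade whose support (the union of its blocks) has exactly k+1 elements, then U is the set of all k-element subsets of that (k+1)-element set. -/
/-- If the support of a `k`-unitrade `U` has exactly `k+1` elements then `U`
consists of all `k`-element subsets of its support. -/
theorem stmt12 {V : Type*} [DecidableEq V] (k : ℕ) (U : Finset (Finset V))
    (hU : IsUnitrade k U) (hsupp : (U.sup id).card = k + 1) :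
    U = (U.sup id).powersetCard k := by
  obtain ⟨hcard, heven⟩ := hU
  set S := U.sup id with hS
  have hsub : ∀ u ∈ U, u ⊆ S := fun u hu => Finset.le_sup (f := id) hu
  have hne : U.Nonempty := by
    rcases U.eq_empty_or_nonempty with h | h
    · exfalso; rw [h] at hS; simp [hS] at hsupp
    · exact h
  obtain ⟨u0, hu0⟩ := hne
  have hu0S : u0 ⊆ S := hsub u0 hu0
  have hu0c : u0.card = k := hcard u0 hu0
  have hk : 1 ≤ k := by
    by_contra h
    push_neg at h
    interval_cases k
    have hSempty : S = ∅ := by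
      rw [← Finset.subset_empty]
      intro x hx
      rw [hS, Finset.mem_sup] at hx
      obtain ⟨u, hu, hxu⟩ := hx
      have := hcard u hu
      rw [Finset.card_eq_zero] at this
      simp [this] at hxu
    rw [hSempty] at hsupp
    simp at hsupp
  ext u
  rw [Finset.mem_powersetCard]
  constructor
  · intro hu; exact ⟨hsub u hu, hcard u hu⟩
  · rintro ⟨huS, huc⟩
    by_contra huU
    have hune : u ≠ u0 := fun h => huU (h ▸ hu0)
    set w := u ∩ u0 with hw
    have hwu : w ⊆ u := Finset.inter_subset_left
    have hwu0 : w ⊆ u0 := Finset.inter_subset_right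
    have hwS : w ⊆ S := hwu.trans huS
    have hwle : w.card ≤ k := huc ▸ Finset.card_le_card hwu
    have hwne : w.card ≠ k := by
      intro h
      have h1 : w = u := Finset.eq_of_subset_of_card_le hwu (by omega)
      have h2 : u = u0 := Finset.eq_of_subset_of_card_le (h1 ▸ hwu0) (by omega)
      exact hune h2
    have hunion : (u ∪ u0).card + w.card = u.card + u0.card := by
      rw [hw]; exact Finset.card_union_add_card_inter u u0
    have hunle : (u ∪ u0).card ≤ k + 1 := by
      rw [← hsupp]
      exact Finset.card_le_card (Finset.union_subset huS hu0S)
    have hwcard : w.card = k - 1 := by omega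
    -- key claim: any k-subset of S containing w is u or u0
    have hkey : ∀ v, v ⊆ S → v.card = k → w ⊆ v → v = u ∨ v = u0 := by
      intro v hvS hvc hwv
      have hvw : (v \ w).card = 1 := by
        rw [Finset.card_sdiff_of_subset hwv, hvc, hwcard]; omega
      have huw : (u \ w).card = 1 := by
        rw [Finset.card_sdiff_of_subset hwu, huc, hwcard]; omega
      have hu0w : (u0 \ w).card = 1 := by
        rw [Finset.card_sdiff_of_subset hwu0, hu0c, hwcard]; omega
      have hSw : (S \ w).card = 2 := by
        rw [Finset.card_sdiff_of_subset hwS, hsupp, hwcard]; omega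
      obtain ⟨a, ha⟩ := Finset.card_eq_one.mp hvw
      obtain ⟨b, hb⟩ := Finset.card_eq_one.mp huw
      obtain ⟨c, hc⟩ := Finset.card_eq_one.mp hu0w
      have hvu : w ∪ (v \ w) = v := Finset.union_sdiff_of_subset hwv
      have huu : w ∪ (u \ w) = u := Finset.union_sdiff_of_subset hwu
      have hu0u : w ∪ (u0 \ w) = u0 := Finset.union_sdiff_of_subset hwu0
      have hbc : b ≠ c := by
        intro h
        apply hune
        rw [← huu, ← hu0u, hb, hc, h]
      have hsubbc : ({b, c} : Finset V) ⊆ S \ w := by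
        have hbm : b ∈ S \ w :=
          Finset.sdiff_subset_sdiff huS le_rfl
            (by rw [hb]; exact Finset.mem_singleton_self b)
        have hcm : c ∈ S \ w :=
          Finset.sdiff_subset_sdiff hu0S le_rfl
            (by rw [hc]; exact Finset.mem_singleton_self c)
        intro x hx
        rcases Finset.mem_insert.mp hx with h | h
        · exact h ▸ hbm
        · rw [Finset.mem_singleton] at h; exact h ▸ hcm
      have hbceq : ({b, c} : Finset V) = S \ w := by
        apply Finset.eq_of_subset_of_card_le hsubbc
        rw [Finset.card_insert_of_notMem (by simpa using hbc), Finset.card_singleton, hSw]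
      have haS : a ∈ S \ w := by
        have : a ∈ v \ w := by rw [ha]; exact Finset.mem_singleton_self a
        exact Finset.sdiff_subset_sdiff hvS le_rfl this
      rw [← hbceq, Finset.mem_insert, Finset.mem_singleton] at haS
      rcases haS with h | h
      · left; rw [← hvu, ← huu, ha, hb, h]
      · right; rw [← hvu, ← hu0u, ha, hc, h]
    have hfilter : U.filter (fun v => w ⊆ v) = {u0} := by
      apply Finset.Subset.antisymm
      · intro v hv
        rw [Finset.mem_filter] at hv
        obtain ⟨hvU, hwv⟩ := hv
        rcases hkey v (hsub v hvU) (hcard v hvU) hwv with h | h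
        · exact absurd (h ▸ hvU) huU
        · rw [Finset.mem_singleton]; exact h
      · intro v hv
        rw [Finset.mem_singleton] at hv
        subst hv
        exact Finset.mem_filter.mpr ⟨hu0, hwu0⟩
    have := heven w (by omega)
    rw [hfilter, Finset.card_singleton] at this
    exact Nat.not_even_one this
end

section
/- The vector space over GF(2) of k-unitrades on an n-element set is spanned by the unitrades W_k^i, where each W_k^i is the collection of all k-subsets of some (k+1)-element subset of the ground set. -/
lemma even_card_symmDiff {α : Type*} [DecidableEq α] {A B : Finset α}
    (hA : Even A.card) (hB : Even B.card) : Even ((symmDiff A B).card) := by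
  have h1 : (symmDiff A B ∪ (A ∩ B)).card = (symmDiff A B).card + (A ∩ B).card :=
    Finset.card_union_of_disjoint (by simpa [Finset.inf_eq_inter] using disjoint_symmDiff_inf A B)
  have h2 : symmDiff A B ∪ (A ∩ B) = A ∪ B := by
    simpa [Finset.sup_eq_union, Finset.inf_eq_inter] using symmDiff_sup_inf A B
  have h3 := Finset.card_union_add_card_inter A B
  rw [h2] at h1
  rw [Nat.even_iff] at *
  omega

lemma isUnitrade_symmDiff {V : Type*} [DecidableEq V] {k : ℕ} {A B : Finset (Finset V)}
    (hA : IsUnitrade k A) (hB : IsUnitrade k B) : IsUnitrade k (symmDiff A B) := by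
  constructor
  · intro u hu
    rcases Finset.mem_symmDiff.mp hu with ⟨h, _⟩ | ⟨h, _⟩
    · exact hA.1 u h
    · exact hB.1 u h
  · intro w hw
    have hfil : (symmDiff A B).filter (fun u => w ⊆ u)
        = symmDiff (A.filter fun u => w ⊆ u) (B.filter fun u => w ⊆ u) := by
      ext t
      simp only [Finset.mem_filter, Finset.mem_symmDiff]
      tauto
    rw [hfil]
    exact even_card_symmDiff (hA.2 w hw) (hB.2 w hw)

lemma isUnitrade_powersetCard {V : Type*} [DecidableEq V] {k : ℕ} {S : Finset V}
    (hS : S.card = k + 1) : IsUnitrade k (S.powersetCard k) := by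
  constructor
  · intro u hu
    exact (Finset.mem_powersetCard.mp hu).2
  · intro w hw
    by_cases hwS : w ⊆ S
    · have himg : (S.powersetCard k).filter (fun u => w ⊆ u)
          = (S \ w).image (fun y => insert y w) := by
        ext t
        simp only [Finset.mem_filter, Finset.mem_powersetCard, Finset.mem_image,
          Finset.mem_sdiff]
        constructor
        · rintro ⟨⟨htS, htc⟩, hwt⟩
          have hc1 : (t \ w).card = 1 := by
            rw [Finset.card_sdiff_of_subset hwt]; omega
          obtain ⟨y, hy⟩ := Finset.card_eq_one.mp hc1
          have hyt : y ∈ t \ w := hy ▸ Finset.mem_singleton_self y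
          rw [Finset.mem_sdiff] at hyt
          refine ⟨y, ⟨htS hyt.1, hyt.2⟩, ?_⟩
          have : w ∪ (t \ w) = t := Finset.union_sdiff_of_subset hwt
          rw [hy] at this
          rw [← this]
          ext z; simp [or_comm]
        · rintro ⟨y, ⟨hyS, hyw⟩, rfl⟩
          refine ⟨⟨Finset.insert_subset hyS hwS, ?_⟩, Finset.subset_insert y w⟩
          rw [Finset.card_insert_of_notMem hyw]; omega
      rw [himg, Finset.card_image_of_injOn, Finset.card_sdiff_of_subset hwS, hS]
      · have : k + 1 - w.card = 2 := by omega
        rw [this]; exact ⟨1, rfl⟩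
      · intro y hy y' hy' hins
        rw [Finset.mem_coe, Finset.mem_sdiff] at hy hy'
        have hins' : insert y w = insert y' w := hins
        have : y ∈ insert y' w := hins' ▸ Finset.mem_insert_self y w
        rcases Finset.mem_insert.mp this with h | h
        · exact h
        · exact absurd h hy.2
    · have : (S.powersetCard k).filter (fun u => w ⊆ u) = ∅ := by
        rw [Finset.filter_eq_empty_iff]
        intro t ht hwt
        exact hwS (hwt.trans (Finset.mem_powersetCard.mp ht).1)
      rw [this]
      simp

lemma unitrade_span_aux {V : Type*} [DecidableEq V] (k : ℕ) (hk : 1 ≤ k) (V₀ : Finset V)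
    (r : V → ℕ) (hr : ∀ a ∈ V₀, ∀ b ∈ V₀, r a = r b → a = b) :
    ∀ N : ℕ, ∀ U : Finset (Finset V),
      (∑ t ∈ U, (k + 2) ^ (∑ v ∈ t, 2 ^ r v)) < N →
      (∀ u ∈ U, u ⊆ V₀) → IsUnitrade k U →
      ∃ L : List (Finset V), (∀ S ∈ L, S.card = k + 1) ∧
        U = (L.map fun S => S.powersetCard k).foldr symmDiff ∅ := by
  intro N
  induction N with
  | zero => intro U h; exact absurd h (Nat.not_lt_zero _)
  | succ N ih =>
    intro U hM hV₀ hU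
    rcases U.eq_empty_or_nonempty with rfl | hne
    · exact ⟨[], by simp, by simp⟩
    set e : Finset V → ℕ := fun t => ∑ v ∈ t, 2 ^ r v with he
    obtain ⟨u, huU, hmax⟩ := U.exists_max_image e hne
    have hcard : u.card = k := hU.1 u huU
    have hune : u.Nonempty := Finset.card_pos.mp (by omega)
    obtain ⟨a, hau, hamin⟩ := u.exists_min_image r hune
    set w : Finset V := u.erase a with hwdef
    have haw : a ∉ w := Finset.notMem_erase a u
    have huw : u = insert a w := (Finset.insert_erase hau).symm
    have hwcard : w.card + 1 = k := by
      rw [hwdef, Finset.card_erase_of_mem hau]; omega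
    have heven := hU.2 w hwcard
    have huf : u ∈ U.filter (fun t => w ⊆ t) :=
      Finset.mem_filter.2 ⟨huU, Finset.erase_subset a u⟩
    have h1 : 1 < (U.filter fun t => w ⊆ t).card := by
      have hpos : 0 < (U.filter fun t => w ⊆ t).card := Finset.card_pos.mpr ⟨u, huf⟩
      rcases heven with ⟨c, hc⟩
      omega
    obtain ⟨u', hu'f, hu'ne⟩ := Finset.exists_mem_ne h1 u
    obtain ⟨hu'U, hwu'⟩ := Finset.mem_filter.mp hu'f
    have hu'card : u'.card = k := hU.1 u' hu'U
    have hc1 : (u' \ w).card = 1 := by rw [Finset.card_sdiff_of_subset hwu']; omega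
    obtain ⟨x, hx⟩ := Finset.card_eq_one.mp hc1
    have hxmem : x ∈ u' \ w := hx ▸ Finset.mem_singleton_self x
    rw [Finset.mem_sdiff] at hxmem
    obtain ⟨hxu', hxw⟩ := hxmem
    have hu'eq : u' = insert x w := by
      have := Finset.union_sdiff_of_subset hwu'
      rw [hx] at this
      rw [← this]; ext z; simp [or_comm]
    have hxa : x ≠ a := by
      rintro rfl
      exact hu'ne (hu'eq.trans huw.symm)
    have haV₀ : a ∈ V₀ := hV₀ u huU hau
    have hxV₀ : x ∈ V₀ := hV₀ u' hu'U hxu'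
    -- r x < r a
    have heu' : e u' = 2 ^ r x + e w := by rw [hu'eq, he]; exact Finset.sum_insert hxw
    have heu : e u = 2 ^ r a + e w := by rw [huw, he]; exact Finset.sum_insert haw
    have hrxa : r x < r a := by
      have hle : e u' ≤ e u := hmax u' hu'U
      have : 2 ^ r x ≤ 2 ^ r a := by omega
      have hle2 : r x ≤ r a := (Nat.pow_le_pow_iff_right (by norm_num)).mp this
      have : r x ≠ r a := fun h => hxa (hr x hxV₀ a haV₀ h)
      omega
    have hxu : x ∉ u := by
      rw [huw]; simp only [Finset.mem_insert]
      rintro (rfl | h)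
      · exact hxa rfl
      · exact hxw h
    set S : Finset V := insert x u with hSdef
    have hScard : S.card = k + 1 := by rw [hSdef, Finset.card_insert_of_notMem hxu]; omega
    have hSV₀ : S ⊆ V₀ := Finset.insert_subset hxV₀ (hV₀ u huU)
    set W : Finset (Finset V) := S.powersetCard k with hWdef
    have huW : u ∈ W := Finset.mem_powersetCard.2 ⟨Finset.subset_insert x u, hcard⟩
    have hueq : u = S.erase x := (Finset.erase_insert hxu).symm
    -- every other block of W has strictly smaller e
    have hkey : ∀ t ∈ W, t ≠ u → e t < e u := by
      intro t ht htne
      obtain ⟨htS, htc⟩ := Finset.mem_powersetCard.mp ht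
      have hc2 : (S \ t).card = 1 := by rw [Finset.card_sdiff_of_subset htS]; omega
      obtain ⟨y, hy⟩ := Finset.card_eq_one.mp hc2
      have hymem : y ∈ S \ t := hy ▸ Finset.mem_singleton_self y
      rw [Finset.mem_sdiff] at hymem
      obtain ⟨hyS, hyt⟩ := hymem
      have hteq : t = S.erase y := by
        apply Finset.eq_of_subset_of_card_le (Finset.subset_erase.2 ⟨htS, hyt⟩)
        rw [Finset.card_erase_of_mem hyS, hScard, htc]
        omega
      have hyx : y ≠ x := by
        rintro rfl
        exact htne (hteq.trans hueq.symm)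
      have hsum1 : e t + 2 ^ r y = e S := by
        rw [hteq, he]; exact Finset.sum_erase_add S _ hyS
      have hsum2 : e u + 2 ^ r x = e S := by
        rw [hueq, he]
        exact Finset.sum_erase_add S _ (Finset.mem_insert_self x u)
      have hyu : y ∈ u := by
        rcases Finset.mem_insert.mp hyS with h | h
        · exact absurd h hyx
        · exact h
      have hry : r x < r y := by
        by_cases hya : y = a
        · rw [hya]; exact hrxa
        · have hyw : y ∈ w := Finset.mem_erase.2 ⟨hya, hyu⟩
          have h1 : r a ≤ r y := hamin y hyu
          have h2 : r a ≠ r y := fun h => hya (hr a haV₀ y (hV₀ u huU hyu) h).symm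
          omega
      have : 2 ^ r x < 2 ^ r y := Nat.pow_lt_pow_right (by norm_num) hry
      omega
    set U' : Finset (Finset V) := symmDiff U W with hU'def
    have hU'uni : IsUnitrade k U' := isUnitrade_symmDiff hU (isUnitrade_powersetCard hScard)
    have hU'V₀ : ∀ t ∈ U', t ⊆ V₀ := by
      intro t ht
      rcases Finset.mem_symmDiff.mp ht with ⟨h, _⟩ | ⟨h, _⟩
      · exact hV₀ t h
      · exact (Finset.mem_powersetCard.mp h).1.trans hSV₀
    -- measure decreases
    set M : Finset (Finset V) → ℕ := fun X => ∑ t ∈ X, (k + 2) ^ e t with hMdef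
    have hMeq : M U' + M (U ∩ W) = M U + M (W \ U) := by
      have d1 : Disjoint U' (U ∩ W) := by
        simpa [Finset.inf_eq_inter] using disjoint_symmDiff_inf U W
      have e1 : U' ∪ (U ∩ W) = U ∪ W := by
        simpa [Finset.sup_eq_union, Finset.inf_eq_inter] using symmDiff_sup_inf U W
      have d2 : Disjoint U (W \ U) := Finset.disjoint_sdiff
      have e2 : U ∪ (W \ U) = U ∪ W := Finset.union_sdiff_self_eq_union
      calc M U' + M (U ∩ W) = M (U' ∪ (U ∩ W)) := (Finset.sum_union d1).symm
        _ = M (U ∪ W) := by rw [e1]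
        _ = M (U ∪ (W \ U)) := by rw [e2]
        _ = M U + M (W \ U) := Finset.sum_union d2
    have heupos : 1 ≤ e u := by
      have : 1 ≤ 2 ^ r a := Nat.one_le_two_pow
      omega
    have hlt : M (W \ U) < M (U ∩ W) := by
      have h1 : (k + 2) ^ e u ≤ M (U ∩ W) := by
        show (k + 2) ^ e u ≤ ∑ t ∈ U ∩ W, (k + 2) ^ e t
        exact Finset.single_le_sum (f := fun t => (k + 2) ^ e t) (fun i _ => Nat.zero_le _)
          (Finset.mem_inter.2 ⟨huU, huW⟩)
      have h2 : M (W \ U) ≤ M (W.erase u) := by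
        apply Finset.sum_le_sum_of_subset
        intro t ht
        rw [Finset.mem_sdiff] at ht
        exact Finset.mem_erase.2 ⟨fun h => ht.2 (h ▸ huU), ht.1⟩
      have h3 : M (W.erase u) ≤ (W.erase u).card * (k + 2) ^ (e u - 1) := by
        rw [← smul_eq_mul]
        apply Finset.sum_le_card_nsmul
        intro t ht
        rw [Finset.mem_erase] at ht
        have := hkey t ht.2 ht.1
        exact Nat.pow_le_pow_right (by omega) (by omega)
      have hWcard : W.card = k + 1 := by
        rw [hWdef, Finset.card_powersetCard, hScard]
        have h := Nat.choose_symm (n := k + 1) (k := 1) (by omega)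
        simp only [Nat.add_sub_cancel] at h
        rw [h, Nat.choose_one_right]
      have h4 : (W.erase u).card = k := by
        rw [Finset.card_erase_of_mem huW, hWcard]
        omega
      have h5 : k * (k + 2) ^ (e u - 1) < (k + 2) ^ e u := by
        have : (k + 2) ^ e u = (k + 2) ^ (e u - 1) * (k + 2) := by
          rw [← pow_succ]; congr 1; omega
        rw [this]
        have hp : 0 < (k + 2) ^ (e u - 1) := Nat.pow_pos (by omega)
        calc k * (k + 2) ^ (e u - 1) = (k + 2) ^ (e u - 1) * k := by ring
          _ < (k + 2) ^ (e u - 1) * (k + 2) :=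
            Nat.mul_lt_mul_of_pos_left (by omega) hp
      rw [h4] at h3
      omega
    have hMU : M U = ∑ t ∈ U, (k + 2) ^ (∑ v ∈ t, 2 ^ r v) := rfl
    have hM' : (∑ t ∈ U', (k + 2) ^ (∑ v ∈ t, 2 ^ r v)) < N := by
      have hMU' : M U' = ∑ t ∈ U', (k + 2) ^ (∑ v ∈ t, 2 ^ r v) := rfl
      omega
    obtain ⟨L, hL1, hL2⟩ := ih U' hM' hU'V₀ hU'uni
    refine ⟨S :: L, ?_, ?_⟩
    · intro T hT
      rcases List.mem_cons.mp hT with rfl | h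
      · exact hScard
      · exact hL1 T h
    · simp only [List.map_cons, List.foldr_cons, ← hL2]
      rw [hU'def, symmDiff_comm U W, symmDiff_symmDiff_cancel_left]

/-- The `GF(2)` vector space of `k`-unitrades is spanned by the unitrades
`W_k(S)` consisting of all `k`-subsets of a `(k+1)`-element set `S`: every
`k`-unitrade is a symmetric difference of such unitrades. -/
theorem stmt13 {V : Type*} [DecidableEq V] (k : ℕ) (hk : 1 ≤ k)
    (U : Finset (Finset V)) (hU : IsUnitrade k U) :
    ∃ L : List (Finset V), (∀ S ∈ L, S.card = k + 1) ∧
      U = (L.map fun S => S.powersetCard k).foldr symmDiff ∅ := by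
  let V₀ : Finset V := U.sup id
  let r : V → ℕ := fun v => List.idxOf v V₀.toList
  have hr : ∀ a ∈ V₀, ∀ b ∈ V₀, r a = r b → a = b := by
    intro a ha b hb hab
    have ha' : a ∈ V₀.toList := Finset.mem_toList.2 ha
    have hb' : b ∈ V₀.toList := Finset.mem_toList.2 hb
    have hla : List.idxOf a V₀.toList < V₀.toList.length := List.idxOf_lt_length_iff.2 ha'
    have hlb : List.idxOf b V₀.toList < V₀.toList.length := List.idxOf_lt_length_iff.2 hb'
    have g1 := List.idxOf_get hla
    have g2 := List.idxOf_get hlb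
    have hab' : List.idxOf a V₀.toList = List.idxOf b V₀.toList := hab
    rw [← g1, ← g2]
    congr 1
    exact Fin.ext hab'
  have hV₀ : ∀ u ∈ U, u ⊆ V₀ := by
    intro u hu
    exact Finset.le_sup (f := id) hu
  exact unitrade_span_aux k hk V₀ r hr
    ((∑ t ∈ U, (k + 2) ^ (∑ v ∈ t, 2 ^ r v)) + 1) U (Nat.lt_succ_self _) hV₀ hU
end

section
/- There is no k-unitrade U with k+1 < |U| < 2k. Moreover, every k-unitrade of cardinality exactly 2k is the symmetric difference of two unitrades of the form W_k(S1) and W_k(S2) (all k-subsets of (k+1)-sets S1, S2) that share at least one common block. -/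
namespace S15
open Finset

variable {V : Type*} [DecidableEq V]

lemma unitrade_symmDiff {k : ℕ} {A B : Finset (Finset V)} (hA : IsUnitrade k A)
    (hB : IsUnitrade k B) : IsUnitrade k (symmDiff A B) := by
  constructor
  · intro u hu
    rw [Finset.mem_symmDiff] at hu
    rcases hu with ⟨h, -⟩ | ⟨h, -⟩
    · exact hA.1 u h
    · exact hB.1 u h
  · intro w hw
    have h1 : (symmDiff A B).filter (fun u => w ⊆ u)
        = symmDiff (A.filter (fun u => w ⊆ u)) (B.filter (fun u => w ⊆ u)) := by
      ext v; simp only [Finset.mem_symmDiff, Finset.mem_filter]; tauto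
    rw [h1]
    set X := A.filter (fun u => w ⊆ u)
    set Y := B.filter (fun u => w ⊆ u)
    have hX : Even X.card := hA.2 w hw
    have hY : Even Y.card := hB.2 w hw
    have h2 : symmDiff X Y = (X ∪ Y) \ (X ∩ Y) := by
      ext v; simp only [Finset.mem_symmDiff, Finset.mem_sdiff, Finset.mem_union,
        Finset.mem_inter]; tauto
    have h3 := Finset.card_union_add_card_inter X Y
    have h4 : ((X ∪ Y) \ (X ∩ Y)).card + (X ∩ Y).card = (X ∪ Y).card :=
      Finset.card_sdiff_add_card_eq_card (Finset.inter_subset_union)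
    rw [h2, Nat.even_iff] at *
    omega

lemma unitrade_powersetCard {k : ℕ} {S : Finset V} (hS : S.card = k + 1) :
    IsUnitrade k (S.powersetCard k) := by
  constructor
  · intro u hu; exact (Finset.mem_powersetCard.1 hu).2
  · intro w hw
    by_cases hws : w ⊆ S
    · have h1 : (S.powersetCard k).filter (fun u => w ⊆ u)
          = (S \ w).image (fun t => insert t w) := by
        ext u
        simp only [Finset.mem_filter, Finset.mem_powersetCard, Finset.mem_image,
          Finset.mem_sdiff]
        constructor
        · rintro ⟨⟨huS, huk⟩, hwu⟩
          have h2 : (u \ w).Nonempty := by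
            rw [← Finset.card_pos, Finset.card_sdiff_of_subset hwu]; omega
          obtain ⟨t, ht⟩ := h2
          rw [Finset.mem_sdiff] at ht
          refine ⟨t, ⟨huS ht.1, ht.2⟩, ?_⟩
          apply Finset.eq_of_subset_of_card_le
          · intro a ha
            rcases Finset.mem_insert.1 ha with rfl | ha
            · exact ht.1
            · exact hwu ha
          · rw [Finset.card_insert_of_notMem ht.2]; omega
        · rintro ⟨t, ⟨htS, htw⟩, rfl⟩
          refine ⟨⟨?_, ?_⟩, Finset.subset_insert _ _⟩
          · intro a ha
            rcases Finset.mem_insert.1 ha with rfl | ha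
            · exact htS
            · exact hws ha
          · rw [Finset.card_insert_of_notMem htw]; omega
      rw [h1, Finset.card_image_of_injOn]
      · have : (S \ w).card = 2 := by rw [Finset.card_sdiff_of_subset hws]; omega
        rw [this]; exact even_two
      · intro a ha b hb hab
        simp only [Finset.coe_sdiff, Set.mem_diff, Finset.mem_coe] at ha hb
        have hab' : insert a w = insert b w := hab
        have : a ∈ insert b w := hab' ▸ Finset.mem_insert_self a w
        rcases Finset.mem_insert.1 this with rfl | h
        · rfl
        · exact absurd h ha.2
    · have h1 : (S.powersetCard k).filter (fun u => w ⊆ u) = ∅ := by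
        rw [Finset.filter_eq_empty_iff]
        intro u hu hwu
        exact hws (hwu.trans (Finset.mem_powersetCard.1 hu).1)
      rw [h1]; simp


def nbrOf (U : Finset (Finset V)) (u0 : Finset V) (x : V) : Finset (Finset V) :=
  U.filter (fun v => u0 \ v = {x})

def farOf (U : Finset (Finset V)) (u0 : Finset V) : Finset (Finset V) :=
  U.filter (fun v => 2 ≤ (u0 \ v).card)

def AOf (U : Finset (Finset V)) (u0 : Finset V) (y : V) : Finset V :=
  u0.filter (fun x => insert y (u0.erase x) ∈ U)

lemma erase_subset_of_nbr {U : Finset (Finset V)} {u0 : Finset V} {x : V} {v : Finset V}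
    (hv : v ∈ nbrOf U u0 x) : u0.erase x ⊆ v := by
  rw [nbrOf, Finset.mem_filter] at hv
  intro a ha
  rw [Finset.mem_erase] at ha
  by_contra hav
  have : a ∈ u0 \ v := Finset.mem_sdiff.2 ⟨ha.2, hav⟩
  rw [hv.2, Finset.mem_singleton] at this
  exact ha.1 this

lemma nbr_shape {k : ℕ} {U : Finset (Finset V)} {u0 : Finset V} {x : V} {v : Finset V}
    (hU : IsUnitrade k U) (hu0 : u0 ∈ U) (hx : x ∈ u0) (hv : v ∈ nbrOf U u0 x) :
    ∃ y, y ∉ u0 ∧ v = insert y (u0.erase x) := by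
  have hu0k : u0.card = k := hU.1 u0 hu0
  have hvU : v ∈ U := (Finset.mem_filter.1 hv).1
  have hvk : v.card = k := hU.1 v hvU
  have hxv : x ∉ v := by
    have : x ∈ u0 \ v := by
      rw [(Finset.mem_filter.1 hv).2]; exact Finset.mem_singleton_self x
    exact (Finset.mem_sdiff.1 this).2
  have hsub : u0.erase x ⊆ v := erase_subset_of_nbr hv
  have hcard : (u0.erase x).card = k - 1 := by rw [Finset.card_erase_of_mem hx, hu0k]
  have hk1 : 1 ≤ k := by rw [← hu0k]; exact Finset.card_pos.2 ⟨x, hx⟩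
  have hne : (v \ u0.erase x).Nonempty := by
    rw [← Finset.card_pos, Finset.card_sdiff_of_subset hsub, hvk, hcard]; omega
  obtain ⟨y, hy⟩ := hne
  rw [Finset.mem_sdiff] at hy
  have hynu : y ∉ u0 := by
    intro hyu
    rcases eq_or_ne y x with rfl | hne'
    · exact hxv hy.1
    · exact hy.2 (Finset.mem_erase.2 ⟨hne', hyu⟩)
  refine ⟨y, hynu, ?_⟩
  apply (Finset.eq_of_subset_of_card_le ?_ ?_).symm
  · intro a ha
    rcases Finset.mem_insert.1 ha with rfl | ha
    · exact hy.1
    · exact hsub ha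
  · rw [Finset.card_insert_of_notMem hy.2, hvk, hcard]; omega

lemma filter_erase_eq {k : ℕ} {U : Finset (Finset V)} {u0 : Finset V} {x : V}
    (hU : IsUnitrade k U) (hu0 : u0 ∈ U) (hx : x ∈ u0) :
    U.filter (fun v => u0.erase x ⊆ v) = insert u0 (nbrOf U u0 x) := by
  ext v
  simp only [Finset.mem_filter, Finset.mem_insert, nbrOf]
  constructor
  · rintro ⟨hvU, hsub⟩
    rcases eq_or_ne v u0 with rfl | hne
    · exact Or.inl rfl
    · right
      refine ⟨hvU, ?_⟩
      have h1 : u0 \ v ⊆ {x} := by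
        intro a ha
        rw [Finset.mem_sdiff] at ha
        rw [Finset.mem_singleton]
        by_contra hax
        exact ha.2 (hsub (Finset.mem_erase.2 ⟨hax, ha.1⟩))
      have h2 : (u0 \ v).Nonempty := by
        rw [Finset.sdiff_nonempty]
        intro hsub2
        exact hne (Finset.eq_of_subset_of_card_le hsub2
          (by rw [hU.1 v hvU, hU.1 u0 hu0])).symm
      exact Finset.Nonempty.subset_singleton_iff h2 |>.1 h1
  · rintro (rfl | hv)
    · exact ⟨hu0, Finset.erase_subset _ _⟩
    · exact ⟨hv.1, erase_subset_of_nbr (Finset.mem_filter.2 hv)⟩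

lemma odd_nbr {k : ℕ} {U : Finset (Finset V)} {u0 : Finset V} {x : V}
    (hU : IsUnitrade k U) (hu0 : u0 ∈ U) (hx : x ∈ u0) :
    Odd (nbrOf U u0 x).card := by
  have hu0k : u0.card = k := hU.1 u0 hu0
  have hk1 : 1 ≤ k := by rw [← hu0k]; exact Finset.card_pos.2 ⟨x, hx⟩
  have hcard : (u0.erase x).card + 1 = k := by
    rw [Finset.card_erase_of_mem hx, hu0k]; omega
  have heven := hU.2 (u0.erase x) hcard
  rw [filter_erase_eq hU hu0 hx] at heven
  have hu0n : u0 ∉ nbrOf U u0 x := by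
    rw [nbrOf, Finset.mem_filter]
    rintro ⟨-, h⟩
    rw [Finset.sdiff_self] at h
    exact Finset.singleton_ne_empty x h.symm
  rw [Finset.card_insert_of_notMem hu0n, Nat.even_add_one] at heven
  exact Nat.not_even_iff_odd.1 heven

lemma partition {k : ℕ} {U : Finset (Finset V)} {u0 : Finset V}
    (hU : IsUnitrade k U) (hu0 : u0 ∈ U) :
    U.card = 1 + (∑ x ∈ u0, (nbrOf U u0 x).card) + (farOf U u0).card := by
  have hdisnbr : ∀ x ∈ u0, ∀ y ∈ u0, x ≠ y → Disjoint (nbrOf U u0 x) (nbrOf U u0 y) := by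
    intro x hx y hy hxy
    rw [Finset.disjoint_left]
    intro v hvx hvy
    rw [nbrOf, Finset.mem_filter] at hvx hvy
    rw [hvx.2] at hvy
    exact hxy (Finset.singleton_injective hvy.2)
  have hUeq : U = insert u0 ((u0.biUnion (nbrOf U u0)) ∪ farOf U u0) := by
    ext v
    simp only [Finset.mem_insert, Finset.mem_union, Finset.mem_biUnion, nbrOf, farOf,
      Finset.mem_filter]
    constructor
    · intro hvU
      rcases Nat.lt_or_ge (u0 \ v).card 2 with h2 | h2
      · interval_cases h : (u0 \ v).card
        · left
          have : u0 ⊆ v := by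
            rw [← Finset.sdiff_eq_empty_iff_subset]
            exact Finset.card_eq_zero.1 h
          exact (Finset.eq_of_subset_of_card_le this
            (by rw [hU.1 v hvU, hU.1 u0 hu0])).symm
        · obtain ⟨x, hxeq⟩ := Finset.card_eq_one.1 h
          right; left
          refine ⟨x, ?_, hvU, hxeq⟩
          have : x ∈ u0 \ v := hxeq ▸ Finset.mem_singleton_self x
          exact (Finset.mem_sdiff.1 this).1
      · right; right; exact ⟨hvU, h2⟩
    · rintro (rfl | ⟨x, hx, hvU, -⟩ | ⟨hvU, -⟩) <;> [exact hu0; exact hvU; exact hvU]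
  have hu0nmem : u0 ∉ (u0.biUnion (nbrOf U u0)) ∪ farOf U u0 := by
    simp only [Finset.mem_union, Finset.mem_biUnion, nbrOf, farOf, Finset.mem_filter]
    rintro (⟨x, hx, -, h⟩ | ⟨-, h⟩)
    · rw [Finset.sdiff_self] at h
      exact Finset.singleton_ne_empty x h.symm
    · simp at h
  have hdis2 : Disjoint (u0.biUnion (nbrOf U u0)) (farOf U u0) := by
    rw [Finset.disjoint_left]
    intro v hv1 hv2
    rw [Finset.mem_biUnion] at hv1
    obtain ⟨x, -, hvx⟩ := hv1
    rw [nbrOf, Finset.mem_filter] at hvx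
    rw [farOf, Finset.mem_filter, hvx.2] at hv2
    simp at hv2
  conv_lhs => rw [hUeq]
  rw [Finset.card_insert_of_notMem hu0nmem, Finset.card_union_of_disjoint hdis2,
    Finset.card_biUnion hdisnbr]
  omega

lemma min_card {k : ℕ} {U : Finset (Finset V)} (hU : IsUnitrade k U) (hne : U.Nonempty) :
    k + 1 ≤ U.card := by
  obtain ⟨u0, hu0⟩ := hne
  have h := partition hU hu0
  have h2 : ∀ x ∈ u0, 1 ≤ (nbrOf U u0 x).card := by
    intro x hx
    exact (odd_nbr hU hu0 hx).pos
  have h3 : u0.card ≤ ∑ x ∈ u0, (nbrOf U u0 x).card := by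
    calc u0.card = ∑ _x ∈ u0, 1 := by simp
    _ ≤ _ := Finset.sum_le_sum h2
  rw [hU.1 u0 hu0] at h3
  omega


lemma far_exists {k : ℕ} {U : Finset (Finset V)} {u0 : Finset V} {y x z : V}
    (hU : IsUnitrade k U) (hu0 : u0 ∈ U) (hy : y ∉ u0)
    (hx : x ∈ AOf U u0 y) (hz : z ∈ u0 \ AOf U u0 y) :
    ∃ B, B ∈ farOf U u0 ∧ y ∈ B ∧ u0 \ B = {x, z} := by
  rw [AOf, Finset.mem_filter] at hx
  rw [Finset.mem_sdiff, AOf, Finset.mem_filter] at hz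
  obtain ⟨hxu, hxA⟩ := hx
  obtain ⟨hzu, hzA⟩ := hz
  have hzA' : insert y (u0.erase z) ∉ U := fun h => hzA ⟨hzu, h⟩
  have hxz : x ≠ z := fun h => hzA ⟨hzu, h ▸ hxA⟩
  have hu0k : u0.card = k := hU.1 u0 hu0
  have hk2 : 2 ≤ k := by
    rw [← hu0k]
    exact Finset.one_lt_card.2 ⟨x, hxu, z, hzu, hxz⟩
  set w : Finset V := insert y ((u0.erase x).erase z) with hw
  have hzex : z ∈ u0.erase x := Finset.mem_erase.2 ⟨fun h => hxz h.symm, hzu⟩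
  have hynee : y ∉ (u0.erase x).erase z := fun h =>
    hy (Finset.mem_of_mem_erase (Finset.mem_of_mem_erase h))
  have hwcard : w.card + 1 = k := by
    rw [hw, Finset.card_insert_of_notMem hynee, Finset.card_erase_of_mem hzex,
      Finset.card_erase_of_mem hxu, hu0k]
    omega
  have hwsub : w ⊆ insert y (u0.erase x) := by
    rw [hw]
    intro a ha
    rcases Finset.mem_insert.1 ha with rfl | ha
    · exact Finset.mem_insert_self _ _
    · exact Finset.mem_insert_of_mem (Finset.mem_of_mem_erase ha)
  have hvmem : insert y (u0.erase x) ∈ U.filter (fun u => w ⊆ u) :=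
    Finset.mem_filter.2 ⟨hxA, hwsub⟩
  have heven := hU.2 w hwcard
  have h2le : 2 ≤ (U.filter (fun u => w ⊆ u)).card := by
    have h1 : 1 ≤ (U.filter (fun u => w ⊆ u)).card := Finset.card_pos.2 ⟨_, hvmem⟩
    rcases heven with ⟨c, hc⟩
    omega
  obtain ⟨B, hB, hBne⟩ := Finset.exists_mem_ne
    (s := U.filter (fun u => w ⊆ u)) (by omega) (insert y (u0.erase x))
  rw [Finset.mem_filter] at hB
  obtain ⟨hBU, hwB⟩ := hB
  have hyB : y ∈ B := hwB (Finset.mem_insert_self _ _)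
  have hsub : u0 \ B ⊆ {x, z} := by
    intro a ha
    rw [Finset.mem_sdiff] at ha
    rw [Finset.mem_insert, Finset.mem_singleton]
    by_contra hax
    push_neg at hax
    exact ha.2 (hwB (Finset.mem_insert_of_mem
      (Finset.mem_erase.2 ⟨hax.2, Finset.mem_erase.2 ⟨hax.1, ha.1⟩⟩)))
  have hfar : 2 ≤ (u0 \ B).card := by
    by_contra hlt
    push_neg at hlt
    interval_cases h : (u0 \ B).card
    · have hsub2 : u0 ⊆ B := by
        rw [← Finset.sdiff_eq_empty_iff_subset]
        exact Finset.card_eq_zero.1 h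
      have : u0 = B := Finset.eq_of_subset_of_card_le hsub2
        (by rw [hU.1 B hBU, hU.1 u0 hu0])
      exact hy (this ▸ hyB)
    · obtain ⟨t, hteq⟩ := Finset.card_eq_one.1 h
      have htmem : t ∈ u0 \ B := hteq ▸ Finset.mem_singleton_self t
      have htu0 : t ∈ u0 := (Finset.mem_sdiff.1 htmem).1
      have hBnbr : B ∈ nbrOf U u0 t := Finset.mem_filter.2 ⟨hBU, hteq⟩
      obtain ⟨y', hy', hBeq⟩ := nbr_shape hU hu0 htu0 hBnbr
      have hyy' : y = y' := by
        rcases Finset.mem_insert.1 (hBeq ▸ hyB) with h' | h'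
        · exact h'
        · exact absurd (Finset.mem_of_mem_erase h') hy
      have htxz : t ∈ ({x, z} : Finset V) := hsub htmem
      rcases Finset.mem_insert.1 htxz with rfl | h'
      · exact hBne (by rw [hBeq, hyy'])
      · rw [Finset.mem_singleton] at h'
        subst h'
        exact hzA' (hyy' ▸ hBeq ▸ hBU)
  refine ⟨B, Finset.mem_filter.2 ⟨hBU, hfar⟩, hyB, ?_⟩
  apply Finset.eq_of_subset_of_card_le hsub
  calc ({x, z} : Finset V).card ≤ 2 := Finset.card_insert_le x {z} |>.trans (by simp)
  _ ≤ (u0 \ B).card := hfar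

lemma powerset_subset {k : ℕ} {U : Finset (Finset V)} {u0 : Finset V} {y : V}
    (hU : IsUnitrade k U) (hu0 : u0 ∈ U) (hy : y ∉ u0) (hA : AOf U u0 y = u0) :
    (insert y u0).powersetCard k ⊆ U := by
  have hu0k : u0.card = k := hU.1 u0 hu0
  intro s hs
  rw [Finset.mem_powersetCard] at hs
  obtain ⟨hsS, hsk⟩ := hs
  by_cases hys : y ∈ s
  · have hk1 : 1 ≤ k := by rw [← hsk]; exact Finset.card_pos.2 ⟨y, hys⟩
    have hs'sub : s.erase y ⊆ u0 := by
      intro a ha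
      rw [Finset.mem_erase] at ha
      rcases Finset.mem_insert.1 (hsS ha.2) with h | h
      · exact absurd h ha.1
      · exact h
    have hs'card : (s.erase y).card = k - 1 := by
      rw [Finset.card_erase_of_mem hys, hsk]
    have hex : (u0 \ s.erase y).Nonempty := by
      rw [← Finset.card_pos, Finset.card_sdiff_of_subset hs'sub, hu0k, hs'card]
      omega
    obtain ⟨x, hxm⟩ := hex
    rw [Finset.mem_sdiff] at hxm
    have hs'eq : s.erase y = u0.erase x := by
      apply Finset.eq_of_subset_of_card_le
      · intro a ha
        exact Finset.mem_erase.2 ⟨fun h => hxm.2 (h ▸ ha), hs'sub ha⟩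
      · rw [Finset.card_erase_of_mem hxm.1, hu0k, hs'card]
    have hxA : x ∈ AOf U u0 y := by rw [hA]; exact hxm.1
    rw [AOf, Finset.mem_filter] at hxA
    have : s = insert y (u0.erase x) := by rw [← hs'eq, Finset.insert_erase hys]
    rw [this]
    exact hxA.2
  · have : s ⊆ u0 := fun a ha => by
      rcases Finset.mem_insert.1 (hsS ha) with h | h
      · exact absurd (h ▸ ha) hys
      · exact h
    have : s = u0 := Finset.eq_of_subset_of_card_le this (by omega)
    rw [this]; exact hu0

lemma main {k : ℕ} {U : Finset (Finset V)} (hU : IsUnitrade k U) (hne : U.Nonempty)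
    (hk : 2 ≤ k) : U.card = k + 1 ∨ 2 * k ≤ U.card := by
  obtain ⟨u0, hu0⟩ := hne
  have hu0k : u0.card = k := hU.1 u0 hu0
  by_cases hall : ∃ y, y ∉ u0 ∧ AOf U u0 y = u0
  · obtain ⟨y, hy, hA⟩ := hall
    set W := (insert y u0).powersetCard k with hW
    have hsub : W ⊆ U := powerset_subset hU hu0 hy hA
    have hWcard : W.card = k + 1 := by
      rw [hW, Finset.card_powersetCard, Finset.card_insert_of_notMem hy, hu0k,
        Nat.choose_succ_self_right]
    have hWU : IsUnitrade k W :=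
      unitrade_powersetCard (by rw [Finset.card_insert_of_notMem hy, hu0k])
    have hsd : symmDiff U W = U \ W := by
      ext v
      simp only [Finset.mem_symmDiff, Finset.mem_sdiff]
      constructor
      · rintro (h | h)
        · exact h
        · exact absurd (hsub h.1) h.2
      · intro h; exact Or.inl h
    have hU' : IsUnitrade k (U \ W) := hsd ▸ unitrade_symmDiff hU hWU
    have hcard' : (U \ W).card = U.card - (k + 1) := by
      rw [Finset.card_sdiff_of_subset hsub, hWcard]
    rcases Finset.eq_empty_or_nonempty (U \ W) with hemp | hne'
    · left
      have h1 : U ⊆ W := by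
        intro v hv
        by_contra hvW
        exact Finset.notMem_empty v (hemp ▸ Finset.mem_sdiff.2 ⟨hv, hvW⟩)
      have h2 := Finset.card_le_card h1
      have h3 := Finset.card_le_card hsub
      omega
    · right
      have h1 := min_card hU' hne'
      have h2 := Finset.card_le_card (Finset.sdiff_subset (s := U) (t := W))
      omega
  · push_neg at hall
    have hx0 : u0.Nonempty := Finset.card_pos.1 (by omega)
    obtain ⟨x0, hx0⟩ := hx0
    have hnbr : (nbrOf U u0 x0).Nonempty := Finset.card_pos.1 (odd_nbr hU hu0 hx0).pos
    obtain ⟨v0, hv0⟩ := hnbr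
    obtain ⟨y, hy, hv0eq⟩ := nbr_shape hU hu0 hx0 hv0
    have hx0A : x0 ∈ AOf U u0 y := by
      rw [AOf, Finset.mem_filter]
      exact ⟨hx0, hv0eq ▸ (Finset.mem_filter.1 hv0).1⟩
    set A := AOf U u0 y with hAdef
    have hAsub : A ⊆ u0 := Finset.filter_subset _ _
    have hd1 : 1 ≤ A.card := Finset.card_pos.2 ⟨x0, hx0A⟩
    have hdk : A.card < k := by
      rcases (Finset.card_le_card hAsub).lt_or_eq with h | h
      · omega
      · exact absurd (Finset.eq_of_subset_of_card_le hAsub (le_of_eq h.symm)) (hall y hy)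
    have hpairex : ∀ p ∈ A ×ˢ (u0 \ A), ∃ B, B ∈ farOf U u0 ∧ y ∈ B ∧ u0 \ B = {p.1, p.2} := by
      rintro ⟨x, z⟩ hp
      rw [Finset.mem_product] at hp
      exact far_exists hU hu0 hy hp.1 hp.2
    choose! f hf1 hf2 hf3 using hpairex
    have hinj : Set.InjOn f (A ×ˢ (u0 \ A)) := by
      rintro ⟨x, z⟩ hp ⟨x', z'⟩ hq hfeq
      simp only [Finset.coe_product, Set.mem_prod, Finset.mem_coe] at hp hq
      have hxz := hf3 (x, z) (Finset.mem_product.2 ⟨hp.1, hp.2⟩)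
      have hxz' := hf3 (x', z') (Finset.mem_product.2 ⟨hq.1, hq.2⟩)
      rw [hfeq, hxz'] at hxz
      dsimp only at hxz
      have hx'm : x' ∈ ({x', z'} : Finset V) := Finset.mem_insert_self _ _
      have hxe : x = x' := by
        have : x ∈ ({x', z'} : Finset V) := by
          rw [hxz]; exact Finset.mem_insert_self _ _
        rcases Finset.mem_insert.1 this with h | h
        · exact h
        · rw [Finset.mem_singleton] at h
          exact absurd (h ▸ hp.1) (Finset.mem_sdiff.1 hq.2).2
      have hze : z = z' := by
        have : z ∈ ({x', z'} : Finset V) := by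
          rw [hxz]; exact Finset.mem_insert_of_mem (Finset.mem_singleton_self _)
        rcases Finset.mem_insert.1 this with h | h
        · exact absurd (h ▸ (Finset.mem_sdiff.1 hp.2).2) (fun h2 => h2 hq.1)
        · exact Finset.mem_singleton.1 h
      rw [hxe, hze]
    have hcardle : A.card * (k - A.card) ≤ (farOf U u0).card := by
      have h1 := Finset.card_le_card_of_injOn f
        (fun p hp => hf1 p hp) (by exact_mod_cast hinj)
      rwa [Finset.card_product, Finset.card_sdiff_of_subset hAsub, hu0k] at h1
    have hnbrsum : k ≤ ∑ x ∈ u0, (nbrOf U u0 x).card := by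
      calc k = ∑ _x ∈ u0, 1 := by rw [Finset.sum_const, smul_eq_mul, mul_one, hu0k]
      _ ≤ _ := Finset.sum_le_sum (fun x hx => (odd_nbr hU hu0 hx).pos)
    have hpart := partition hU hu0
    right
    have hkey : k - 1 ≤ A.card * (k - A.card) := by
      obtain ⟨d', hd'⟩ : ∃ d', A.card = d' + 1 := ⟨A.card - 1, by omega⟩
      obtain ⟨e', he'⟩ : ∃ e', k - A.card = e' + 1 := ⟨k - A.card - 1, by omega⟩
      have hexp : (d' + 1) * (e' + 1) = d' * e' + (d' + e' + 1) := by ring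
      have hge : d' + e' + 1 ≤ (d' + 1) * (e' + 1) := by
        rw [hexp]; exact Nat.le_add_left _ _
      rw [he', hd']
      calc k - 1 = d' + e' + 1 := by omega
      _ ≤ (d' + 1) * (e' + 1) := hge
    have hfar2 : k - 1 ≤ (farOf U u0).card := le_trans hkey hcardle
    omega

lemma inter_union_sdiff' (s t : Finset V) : s ∩ t ∪ s \ t = s := by
  ext a
  simp only [Finset.mem_union, Finset.mem_inter, Finset.mem_sdiff]
  tauto

lemma sdiff_insert_erase {u0 : Finset V} {x y : V} (hx : x ∈ u0) (hy : y ∉ u0) :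
    u0 \ insert y (u0.erase x) = {x} := by
  ext a
  simp only [Finset.mem_sdiff, Finset.mem_insert, Finset.mem_erase, Finset.mem_singleton,
    not_or]
  constructor
  · rintro ⟨ha, -, h⟩
    by_contra hax
    exact h ⟨hax, ha⟩
  · rintro rfl
    exact ⟨hx, fun h => hy (h ▸ hx), fun h => absurd rfl h.1⟩

lemma main2 {k : ℕ} {U : Finset (Finset V)} (hU : IsUnitrade k U) (hk : 2 ≤ k)
    (hcard : U.card = 2 * k) :
    ∃ S1 S2 : Finset V, S1.card = k + 1 ∧ S2.card = k + 1 ∧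
      (S1.powersetCard k ∩ S2.powersetCard k).Nonempty ∧
      U = symmDiff (S1.powersetCard k) (S2.powersetCard k) := by
  have hne : U.Nonempty := Finset.card_pos.1 (by omega)
  obtain ⟨u0, hu0⟩ := hne
  have hu0k : u0.card = k := hU.1 u0 hu0
  -- no y with AOf = u0
  have hall : ∀ y, y ∉ u0 → AOf U u0 y ≠ u0 := by
    intro y hy hA
    set W := (insert y u0).powersetCard k with hW
    have hsub : W ⊆ U := powerset_subset hU hu0 hy hA
    have hWcard : W.card = k + 1 := by
      rw [hW, Finset.card_powersetCard, Finset.card_insert_of_notMem hy, hu0k,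
        Nat.choose_succ_self_right]
    have hWU : IsUnitrade k W :=
      unitrade_powersetCard (by rw [Finset.card_insert_of_notMem hy, hu0k])
    have hsd : symmDiff U W = U \ W := by
      ext v
      simp only [Finset.mem_symmDiff, Finset.mem_sdiff]
      constructor
      · rintro (h | h)
        · exact h
        · exact absurd (hsub h.1) h.2
      · intro h; exact Or.inl h
    have hU' : IsUnitrade k (U \ W) := hsd ▸ unitrade_symmDiff hU hWU
    have hcard' : (U \ W).card = U.card - (k + 1) := by
      rw [Finset.card_sdiff_of_subset hsub, hWcard]
    have hne' : (U \ W).Nonempty := Finset.card_pos.1 (by omega)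
    have := min_card hU' hne'
    omega
  -- find a maximizing y
  have hAsub' : ∀ y, AOf U u0 y ⊆ u0 := fun y => Finset.filter_subset _ _
  have hAlt : ∀ y, y ∉ u0 → (AOf U u0 y).card ≤ k - 1 := by
    intro y hy
    have h1 : (AOf U u0 y).card ≤ k := by rw [← hu0k]; exact Finset.card_le_card (hAsub' y)
    rcases Nat.lt_or_ge (AOf U u0 y).card k with h | h
    · omega
    · have : (AOf U u0 y).card = u0.card := by omega
      exact absurd (Finset.eq_of_subset_of_card_le (hAsub' y) (le_of_eq this.symm))
        (hall y hy)
  obtain ⟨x0, hx0⟩ : u0.Nonempty := Finset.card_pos.1 (by omega)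
  obtain ⟨v0, hv0⟩ : (nbrOf U u0 x0).Nonempty := Finset.card_pos.1 (odd_nbr hU hu0 hx0).pos
  obtain ⟨y0, hy0, hv0eq⟩ := nbr_shape hU hu0 hx0 hv0
  have hx0A : x0 ∈ AOf U u0 y0 :=
    Finset.mem_filter.2 ⟨hx0, hv0eq ▸ (Finset.mem_filter.1 hv0).1⟩
  set Yset : Finset V := (U.sup id) \ u0 with hYset
  have hYmem : ∀ y, y ∉ u0 → (AOf U u0 y).Nonempty → y ∈ Yset := by
    intro y hy ⟨x, hx⟩
    rw [hYset, Finset.mem_sdiff]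
    refine ⟨?_, hy⟩
    rw [Finset.mem_sup]
    exact ⟨insert y (u0.erase x), (Finset.mem_filter.1 hx).2, Finset.mem_insert_self _ _⟩
  obtain ⟨ys, hysY, hysmax⟩ := Finset.exists_max_image Yset (fun y => (AOf U u0 y).card)
    ⟨y0, hYmem y0 hy0 ⟨x0, hx0A⟩⟩
  have hys : ys ∉ u0 := (Finset.mem_sdiff.1 hysY).2
  have hmax : ∀ y, y ∉ u0 → (AOf U u0 y).card ≤ (AOf U u0 ys).card := by
    intro y hy
    rcases Finset.eq_empty_or_nonempty (AOf U u0 y) with h | h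
    · rw [h]; simp
    · exact hysmax y (hYmem y hy h)
  have hd1 : 1 ≤ (AOf U u0 ys).card :=
    le_trans (Finset.card_pos.2 ⟨x0, hx0A⟩) (hmax y0 hy0)
  have hdk : (AOf U u0 ys).card ≤ k - 1 := hAlt ys hys
  -- generic injection bound for any y'
  have hbound : ∀ y', y' ∉ u0 →
      (AOf U u0 y').card * (k - (AOf U u0 y').card) ≤ (farOf U u0).card := by
    intro y' hy'
    set A := AOf U u0 y' with hAdef
    have hAsub : A ⊆ u0 := hAsub' y'
    have hpairex : ∀ p ∈ A ×ˢ (u0 \ A), ∃ B, B ∈ farOf U u0 ∧ y' ∈ B ∧ u0 \ B = {p.1, p.2} := by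
      rintro ⟨x, z⟩ hp
      rw [Finset.mem_product] at hp
      exact far_exists hU hu0 hy' hp.1 hp.2
    choose! f hf1 hf2 hf3 using hpairex
    have hinj : Set.InjOn f (A ×ˢ (u0 \ A)) := by
      rintro ⟨x, z⟩ hp ⟨x', z'⟩ hq hfeq
      simp only [Finset.coe_product, Set.mem_prod, Finset.mem_coe] at hp hq
      have hxz := hf3 (x, z) (Finset.mem_product.2 ⟨hp.1, hp.2⟩)
      have hxz' := hf3 (x', z') (Finset.mem_product.2 ⟨hq.1, hq.2⟩)
      rw [hfeq, hxz'] at hxz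
      dsimp only at hxz
      have hxe : x = x' := by
        have : x ∈ ({x', z'} : Finset V) := by
          rw [hxz]; exact Finset.mem_insert_self _ _
        rcases Finset.mem_insert.1 this with h | h
        · exact h
        · rw [Finset.mem_singleton] at h
          exact absurd (h ▸ hp.1) (Finset.mem_sdiff.1 hq.2).2
      have hze : z = z' := by
        have : z ∈ ({x', z'} : Finset V) := by
          rw [hxz]; exact Finset.mem_insert_of_mem (Finset.mem_singleton_self _)
        rcases Finset.mem_insert.1 this with h | h
        · exact absurd (h ▸ (Finset.mem_sdiff.1 hp.2).2) (fun h2 => h2 hq.1)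
        · exact Finset.mem_singleton.1 h
      rw [hxe, hze]
    have h1 := Finset.card_le_card_of_injOn f (fun p hp => hf1 p hp) (by exact_mod_cast hinj)
    rwa [Finset.card_product, Finset.card_sdiff_of_subset hAsub, hu0k] at h1
  have hnbrsum : k ≤ ∑ x ∈ u0, (nbrOf U u0 x).card := by
    calc k = ∑ _x ∈ u0, 1 := by rw [Finset.sum_const, smul_eq_mul, mul_one, hu0k]
    _ ≤ _ := Finset.sum_le_sum (fun x hx => (odd_nbr hU hu0 hx).pos)
  have hpart := partition hU hu0
  have hkey : k - 1 ≤ (AOf U u0 ys).card * (k - (AOf U u0 ys).card) := by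
    obtain ⟨d', hd'⟩ : ∃ d', (AOf U u0 ys).card = d' + 1 :=
      ⟨(AOf U u0 ys).card - 1, by omega⟩
    obtain ⟨e', he'⟩ : ∃ e', k - (AOf U u0 ys).card = e' + 1 :=
      ⟨k - (AOf U u0 ys).card - 1, by omega⟩
    have hexp : (d' + 1) * (e' + 1) = d' * e' + (d' + e' + 1) := by ring
    have hge : d' + e' + 1 ≤ (d' + 1) * (e' + 1) := by
      rw [hexp]; exact Nat.le_add_left _ _
    rw [he', hd']
    calc k - 1 = d' + e' + 1 := by omega
    _ ≤ (d' + 1) * (e' + 1) := hge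
  have hfar2 : k - 1 ≤ (farOf U u0).card := le_trans hkey (hbound ys hys)
  have hfareq : (farOf U u0).card = k - 1 := by omega
  have hsumeq : (∑ x ∈ u0, (nbrOf U u0 x).card) = k := by omega
  have hnbr1 : ∀ x ∈ u0, (nbrOf U u0 x).card = 1 := by
    intro x hx
    by_contra hne1
    have h2 : 2 ≤ (nbrOf U u0 x).card := by
      have := (odd_nbr hU hu0 hx).pos
      omega
    have hlt : (∑ x ∈ u0, 1) < ∑ x ∈ u0, (nbrOf U u0 x).card := by
      apply Finset.sum_lt_sum (fun i hi => (odd_nbr hU hu0 hi).pos)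
      exact ⟨x, hx, by omega⟩
    rw [Finset.sum_const, smul_eq_mul, mul_one, hu0k, hsumeq] at hlt
    omega
  -- unique neighbour lemma
  have hnbru : ∀ x ∈ u0, ∀ v1 ∈ nbrOf U u0 x, ∀ v2 ∈ nbrOf U u0 x, v1 = v2 := by
    intro x hx v1 h1 v2 h2
    exact Finset.card_le_one.1 (le_of_eq (hnbr1 x hx)) _ h1 _ h2
  -- cover: if the pair count matches |far|, every far block is hit
  have hcover : ∀ y', y' ∉ u0 →
      (AOf U u0 y').card * (k - (AOf U u0 y').card) = k - 1 →
      ∀ B ∈ farOf U u0, y' ∈ B ∧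
        ∃ x z, x ∈ AOf U u0 y' ∧ z ∈ u0 \ AOf U u0 y' ∧ u0 \ B = {x, z} := by
    intro y' hy' hAc B hB
    set A := AOf U u0 y' with hAdef
    have hAsub : A ⊆ u0 := hAsub' y'
    have hpairex : ∀ p ∈ A ×ˢ (u0 \ A), ∃ B, B ∈ farOf U u0 ∧ y' ∈ B ∧ u0 \ B = {p.1, p.2} := by
      rintro ⟨x, z⟩ hp
      rw [Finset.mem_product] at hp
      exact far_exists hU hu0 hy' hp.1 hp.2
    choose! f hf1 hf2 hf3 using hpairex
    have hinj : Set.InjOn f (A ×ˢ (u0 \ A)) := by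
      rintro ⟨x, z⟩ hp ⟨x', z'⟩ hq hfeq
      simp only [Finset.coe_product, Set.mem_prod, Finset.mem_coe] at hp hq
      have hxz := hf3 (x, z) (Finset.mem_product.2 ⟨hp.1, hp.2⟩)
      have hxz' := hf3 (x', z') (Finset.mem_product.2 ⟨hq.1, hq.2⟩)
      rw [hfeq, hxz'] at hxz
      dsimp only at hxz
      have hxe : x = x' := by
        have : x ∈ ({x', z'} : Finset V) := by
          rw [hxz]; exact Finset.mem_insert_self _ _
        rcases Finset.mem_insert.1 this with h | h
        · exact h
        · rw [Finset.mem_singleton] at h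
          exact absurd (h ▸ hp.1) (Finset.mem_sdiff.1 hq.2).2
      have hze : z = z' := by
        have : z ∈ ({x', z'} : Finset V) := by
          rw [hxz]; exact Finset.mem_insert_of_mem (Finset.mem_singleton_self _)
        rcases Finset.mem_insert.1 this with h | h
        · exact absurd (h ▸ (Finset.mem_sdiff.1 hp.2).2) (fun h2 => h2 hq.1)
        · exact Finset.mem_singleton.1 h
      rw [hxe, hze]
    have himgsub : (A ×ˢ (u0 \ A)).image f ⊆ farOf U u0 := by
      intro B' hB'
      obtain ⟨p, hp, rfl⟩ := Finset.mem_image.1 hB'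
      exact hf1 p hp
    have himgcard : ((A ×ˢ (u0 \ A)).image f).card = k - 1 := by
      rw [Finset.card_image_of_injOn (by exact_mod_cast hinj), Finset.card_product,
        Finset.card_sdiff_of_subset hAsub, hu0k, hAc]
    have himg : (A ×ˢ (u0 \ A)).image f = farOf U u0 :=
      Finset.eq_of_subset_of_card_le himgsub (by omega)
    rw [← himg] at hB
    obtain ⟨p, hp, hpB⟩ := Finset.mem_image.1 hB
    have h2 := hf2 p hp
    have h3 := hf3 p hp
    rw [hpB] at h2 h3
    rw [Finset.mem_product] at hp
    exact ⟨h2, p.1, p.2, hp.1, hp.2, h3⟩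
  -- d = 1 or d = k - 1
  have hdor : (AOf U u0 ys).card = 1 ∨ (AOf U u0 ys).card = k - 1 := by
    have hdeq : (AOf U u0 ys).card * (k - (AOf U u0 ys).card) = k - 1 :=
      le_antisymm (hfareq ▸ hbound ys hys) hkey
    obtain ⟨d', hd'⟩ : ∃ d', (AOf U u0 ys).card = d' + 1 :=
      ⟨(AOf U u0 ys).card - 1, by omega⟩
    obtain ⟨e', he'⟩ : ∃ e', k - (AOf U u0 ys).card = e' + 1 :=
      ⟨k - (AOf U u0 ys).card - 1, by omega⟩
    rw [he', hd'] at hdeq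
    have hexp : (d' + 1) * (e' + 1) = d' * e' + (d' + e' + 1) := by ring
    rw [hexp] at hdeq
    have hde0 : d' * e' = 0 := by omega
    rcases Nat.mul_eq_zero.1 hde0 with h | h <;> omega
  -- every x in u0 has a unique neighbour block, giving a "mate" value
  have hmate : ∀ x ∈ u0, ∃ y1, y1 ∉ u0 ∧ insert y1 (u0.erase x) ∈ U ∧
      nbrOf U u0 x = {insert y1 (u0.erase x)} := by
    intro x hx
    obtain ⟨v, hv⟩ : (nbrOf U u0 x).Nonempty := Finset.card_pos.1 (odd_nbr hU hu0 hx).pos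
    obtain ⟨y1, hy1, hveq⟩ := nbr_shape hU hu0 hx hv
    refine ⟨y1, hy1, hveq ▸ (Finset.mem_filter.1 hv).1, ?_⟩
    have h1 : (nbrOf U u0 x).card = 1 := hnbr1 x hx
    obtain ⟨w', hw'⟩ := Finset.card_eq_one.1 h1
    rw [hw'] at hv ⊢
    rw [Finset.mem_singleton] at hv
    rw [← hv, hveq]
  -- rule out d = 1 when k ≥ 3
  have hd : (AOf U u0 ys).card = k - 1 := by
    rcases hdor with hd1' | h
    · -- then k = 2 (so k-1 = 1) or contradiction
      rcases Nat.lt_or_ge k 3 with hk3 | hk3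
      · omega
      · exfalso
        -- far is nonempty
        obtain ⟨B0, hB0⟩ : (farOf U u0).Nonempty := Finset.card_pos.1 (by omega)
        -- all singleton A's: every far block contains every mate value
        have hsing : ∀ x ∈ u0, ∃ yx, yx ∉ u0 ∧ AOf U u0 yx = {x} ∧ yx ∈ B0 := by
          intro x hx
          obtain ⟨yx, hyx, hyxU, -⟩ := hmate x hx
          have hxA : x ∈ AOf U u0 yx := Finset.mem_filter.2 ⟨hx, hyxU⟩
          have hc1 : (AOf U u0 yx).card = 1 := by
            have := hmax yx hyx
            have := Finset.card_pos.2 ⟨x, hxA⟩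
            omega
          obtain ⟨a, ha⟩ := Finset.card_eq_one.1 hc1
          have hax : a = x := by
            have := ha ▸ hxA
            exact (Finset.mem_singleton.1 this).symm
          have hAeq : AOf U u0 yx = {x} := hax ▸ ha
          have hcov := hcover yx hyx (by rw [hAeq, Finset.card_singleton, one_mul]) B0 hB0
          exact ⟨yx, hyx, hAeq, hcov.1⟩
        -- get three distinct elements of u0
        obtain ⟨x1, hx1⟩ : u0.Nonempty := Finset.card_pos.1 (by omega)
        obtain ⟨x2, hx2⟩ : (u0.erase x1).Nonempty := by
          rw [← Finset.card_pos, Finset.card_erase_of_mem hx1]; omega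
        obtain ⟨x3, hx3⟩ : ((u0.erase x1).erase x2).Nonempty := by
          rw [← Finset.card_pos, Finset.card_erase_of_mem hx2,
            Finset.card_erase_of_mem hx1]; omega
        have hx2u : x2 ∈ u0 := Finset.mem_of_mem_erase hx2
        have hx3u : x3 ∈ u0 := Finset.mem_of_mem_erase (Finset.mem_of_mem_erase hx3)
        have h21 : x2 ≠ x1 := (Finset.mem_erase.1 hx2).1
        have h32 : x3 ≠ x2 := (Finset.mem_erase.1 hx3).1
        have h31 : x3 ≠ x1 := (Finset.mem_erase.1 (Finset.mem_of_mem_erase hx3)).1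
        obtain ⟨ya, hya, hAa, hyaB⟩ := hsing x1 hx1
        obtain ⟨yb, hyb, hAb, hybB⟩ := hsing x2 hx2u
        obtain ⟨yc, hyc, hAc', hycB⟩ := hsing x3 hx3u
        have hab : ya ≠ yb := fun h => h21 (by
          have := hAa ▸ h ▸ hAb
          exact (Finset.singleton_injective this).symm ▸ rfl)
        have hac : ya ≠ yc := fun h => h31 (by
          have := hAa ▸ h ▸ hAc'
          exact (Finset.singleton_injective this).symm ▸ rfl)
        have hbc : yb ≠ yc := fun h => h32 (by
          have := hAb ▸ h ▸ hAc'
          exact (Finset.singleton_injective this).symm ▸ rfl)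
        -- B0 \ u0 has card 2 but contains ya, yb, yc
        have hB0U : B0 ∈ U := (Finset.mem_filter.1 hB0).1
        have hB0k : B0.card = k := hU.1 B0 hB0U
        obtain ⟨-, x', z', hx'A, hz'A, hB0sd⟩ :=
          hcover ya hya (by rw [hAa, Finset.card_singleton, one_mul]) B0 hB0
        have hxz' : x' ≠ z' := fun h => (Finset.mem_sdiff.1 hz'A).2 (h ▸ hx'A)
        have hsd2 : (u0 \ B0).card = 2 := by
          rw [hB0sd, Finset.card_insert_of_notMem (by simpa using hxz'),
            Finset.card_singleton]
        have hc1 : (u0 \ B0).card + (u0 ∩ B0).card = k := by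
          rw [Finset.card_sdiff_add_card_inter, hu0k]
        have hc2 : (B0 \ u0).card + (B0 ∩ u0).card = k := by
          rw [Finset.card_sdiff_add_card_inter, hB0k]
        have hc3 : (B0 ∩ u0).card = (u0 ∩ B0).card := by rw [Finset.inter_comm]
        have hsub3 : ({ya, yb, yc} : Finset V) ⊆ B0 \ u0 := by
          intro a ha
          simp only [Finset.mem_insert, Finset.mem_singleton] at ha
          rcases ha with rfl | rfl | rfl
          · exact Finset.mem_sdiff.2 ⟨hyaB, hya⟩
          · exact Finset.mem_sdiff.2 ⟨hybB, hyb⟩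
          · exact Finset.mem_sdiff.2 ⟨hycB, hyc⟩
        have hcard3 : ({ya, yb, yc} : Finset V).card = 3 := by
          rw [Finset.card_insert_of_notMem (by simp [hab, hac]),
            Finset.card_insert_of_notMem (by simpa using hbc), Finset.card_singleton]
        have := Finset.card_le_card hsub3
        omega
    · exact h
  -- now d = k - 1; set up the structure
  set A := AOf U u0 ys with hAdef
  have hAsub : A ⊆ u0 := hAsub' ys
  have hAcard : A.card = k - 1 := hd
  obtain ⟨x1, hx1eq⟩ : ∃ x1, u0 \ A = {x1} := by
    apply Finset.card_eq_one.1
    rw [Finset.card_sdiff_of_subset hAsub, hu0k, hAcard]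
    omega
  have hx1mem : x1 ∈ u0 \ A := hx1eq ▸ Finset.mem_singleton_self x1
  have hx1u0 : x1 ∈ u0 := (Finset.mem_sdiff.1 hx1mem).1
  have hx1A : x1 ∉ A := (Finset.mem_sdiff.1 hx1mem).2
  have hmemA : ∀ x ∈ u0, x ≠ x1 → x ∈ A := by
    intro x hx hxx1
    by_contra hxA
    have h : x ∈ u0 \ A := Finset.mem_sdiff.2 ⟨hx, hxA⟩
    rw [hx1eq, Finset.mem_singleton] at h
    exact hxx1 h
  obtain ⟨y1, hy1, hv1U, hnbrx1⟩ := hmate x1 hx1u0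
  have hy1ys : y1 ≠ ys := fun h =>
    hx1A (Finset.mem_filter.2 ⟨hx1u0, h ▸ hv1U⟩)
  have hAys : ∀ x ∈ A, insert ys (u0.erase x) ∈ U := fun x hx => (Finset.mem_filter.1 hx).2
  have hAmul : A.card * (k - A.card) = k - 1 := by
    have h1 : k - A.card = 1 := by omega
    rw [h1, mul_one, hAcard]
  have hcov := hcover ys hys hAmul
  -- characterize far blocks
  have hfarB : ∀ B ∈ farOf U u0,
      ∃ x ∈ A, B = insert ys (insert y1 ((u0.erase x1).erase x)) := by
    intro B hB
    obtain ⟨hysB, x, z, hxA, hzA, hBsd⟩ := hcov B hB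
    have hzx1 : z = x1 := by
      have h : z ∈ ({x1} : Finset V) := hx1eq ▸ hzA
      exact Finset.mem_singleton.1 h
    subst hzx1
    have hxu0 : x ∈ u0 := hAsub hxA
    have hxx1 : x ≠ z := fun h => hx1A (h ▸ hxA)
    have hBU : B ∈ U := (Finset.mem_filter.1 hB).1
    have hBk : B.card = k := hU.1 B hBU
    set C := (u0.erase z).erase x with hC
    have hCcard : C.card = k - 2 := by
      rw [hC, Finset.card_erase_of_mem (Finset.mem_erase.2 ⟨hxx1, hxu0⟩),
        Finset.card_erase_of_mem hx1u0, hu0k]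
      omega
    have hCu0 : C ⊆ u0 := fun a ha =>
      Finset.mem_of_mem_erase (Finset.mem_of_mem_erase ha)
    have hxnB : x ∉ B := by
      have h : x ∈ u0 \ B := by rw [hBsd]; exact Finset.mem_insert_self _ _
      exact (Finset.mem_sdiff.1 h).2
    have hx1nB : z ∉ B := by
      have h : z ∈ u0 \ B := by
        rw [hBsd]; exact Finset.mem_insert_of_mem (Finset.mem_singleton_self _)
      exact (Finset.mem_sdiff.1 h).2
    have hCB : C ⊆ B := by
      intro a ha
      have ha1 : a ≠ x := (Finset.mem_erase.1 ha).1
      have ha2 : a ≠ z := (Finset.mem_erase.1 (Finset.mem_of_mem_erase ha)).1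
      by_contra haB
      have h : a ∈ u0 \ B := Finset.mem_sdiff.2 ⟨hCu0 ha, haB⟩
      rw [hBsd] at h
      rcases Finset.mem_insert.1 h with h' | h'
      · exact ha1 h'
      · exact ha2 (Finset.mem_singleton.1 h')
    have hBcap : B ∩ u0 = C := by
      apply Finset.Subset.antisymm
      · intro a ha
        rw [Finset.mem_inter] at ha
        have hax : a ≠ x := fun h => hxnB (h ▸ ha.1)
        have hax1 : a ≠ z := fun h => hx1nB (h ▸ ha.1)
        exact Finset.mem_erase.2 ⟨hax, Finset.mem_erase.2 ⟨hax1, ha.2⟩⟩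
      · intro a ha
        exact Finset.mem_inter.2 ⟨hCB ha, hCu0 ha⟩
    have hBcapcard : (B ∩ u0).card = k - 2 := by rw [hBcap, hCcard]
    have h3 := Finset.card_sdiff_add_card_inter B u0
    rw [hBk, hBcapcard] at h3
    have hBsdu : (B \ u0).card = 2 := by omega
    have hysBs : ys ∈ B \ u0 := Finset.mem_sdiff.2 ⟨hysB, hys⟩
    obtain ⟨t, hty, hBsdeq⟩ : ∃ t, t ≠ ys ∧ B \ u0 = {ys, t} := by
      obtain ⟨p, q, hpq, hpqeq⟩ := Finset.card_eq_two.1 hBsdu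
      rw [hpqeq] at hysBs
      rcases Finset.mem_insert.1 hysBs with rfl | h
      · exact ⟨q, fun h => hpq h.symm, hpqeq⟩
      · rw [Finset.mem_singleton] at h
        subst h
        exact ⟨p, fun h => hpq h, by rw [hpqeq, Finset.pair_comm]⟩
    have htBs : t ∈ B \ u0 := by
      rw [hBsdeq]; exact Finset.mem_insert_of_mem (Finset.mem_singleton_self _)
    have htB : t ∈ B := (Finset.mem_sdiff.1 htBs).1
    have htu0 : t ∉ u0 := (Finset.mem_sdiff.1 htBs).2
    have hty1 : t = y1 := by
      by_contra htne
      set w' := insert t C with hw'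
      have htC : t ∉ C := fun h => htu0 (hCu0 h)
      have hw'card : w'.card + 1 = k := by
        rw [hw', Finset.card_insert_of_notMem htC, hCcard]; omega
      have heven := hU.2 w' hw'card
      have hfiltereq : U.filter (fun u => w' ⊆ u) = {B} := by
        apply Finset.Subset.antisymm
        · intro Cb hCb
          rw [Finset.mem_filter] at hCb
          obtain ⟨hCbU, hwCb⟩ := hCb
          have htCb : t ∈ Cb := hwCb (Finset.mem_insert_self _ _)
          have hCCb : C ⊆ Cb := fun a ha => hwCb (Finset.mem_insert_of_mem ha)
          rw [Finset.mem_singleton]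
          rcases Nat.lt_or_ge (u0 \ Cb).card 2 with hlt | hge2
          · interval_cases hcc : (u0 \ Cb).card
            · exfalso
              have hsub2 : u0 ⊆ Cb := by
                rw [← Finset.sdiff_eq_empty_iff_subset]
                exact Finset.card_eq_zero.1 hcc
              have he : u0 = Cb := Finset.eq_of_subset_of_card_le hsub2
                (by rw [hU.1 Cb hCbU, hu0k])
              rw [← he] at htCb
              exact htu0 htCb
            · obtain ⟨x'', hx''⟩ := Finset.card_eq_one.1 hcc
              have hx''s : x'' ∈ u0 \ Cb := hx'' ▸ Finset.mem_singleton_self _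
              have hx''u : x'' ∈ u0 := (Finset.mem_sdiff.1 hx''s).1
              have hCbnbr : Cb ∈ nbrOf U u0 x'' := Finset.mem_filter.2 ⟨hCbU, hx''⟩
              have hx''mem : x'' ∈ ({x, z} : Finset V) := by
                have hnC : x'' ∉ C := fun h => (Finset.mem_sdiff.1 hx''s).2 (hCCb h)
                rw [Finset.mem_insert, Finset.mem_singleton]
                by_contra hcon
                push_neg at hcon
                exact hnC (Finset.mem_erase.2 ⟨hcon.1, Finset.mem_erase.2 ⟨hcon.2, hx''u⟩⟩)
              rcases Finset.mem_insert.1 hx''mem with rfl | hx''1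
              · exfalso
                have hvx : insert ys (u0.erase x'') ∈ nbrOf U u0 x'' :=
                  Finset.mem_filter.2 ⟨hAys x'' hxA, sdiff_insert_erase hxu0 hys⟩
                have hCbeq := hnbru x'' hxu0 Cb hCbnbr _ hvx
                rw [hCbeq] at htCb
                rcases Finset.mem_insert.1 htCb with h | h
                · exact hty h
                · exact htu0 (Finset.mem_of_mem_erase h)
              · exfalso
                rw [Finset.mem_singleton] at hx''1
                subst hx''1
                have hv1nbr : insert y1 (u0.erase x'') ∈ nbrOf U u0 x'' := by
                  rw [hnbrx1]; exact Finset.mem_singleton_self _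
                have hCbeq := hnbru x'' hx1u0 Cb hCbnbr _ hv1nbr
                rw [hCbeq] at htCb
                rcases Finset.mem_insert.1 htCb with h | h
                · exact htne h
                · exact htu0 (Finset.mem_of_mem_erase h)
          · have hCbfar : Cb ∈ farOf U u0 := Finset.mem_filter.2 ⟨hCbU, hge2⟩
            obtain ⟨hysCb, x', z', hx'A, hz'A, hCbsd⟩ := hcov Cb hCbfar
            have hz'x1 : z' = z := by
              have h : z' ∈ ({z} : Finset V) := hx1eq ▸ hz'A
              exact Finset.mem_singleton.1 h
            have hx'x : x' = x := by
              have hx's : x' ∈ u0 \ Cb := by rw [hCbsd]; exact Finset.mem_insert_self _ _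
              have hx'C : x' ∉ C := fun h => (Finset.mem_sdiff.1 hx's).2 (hCCb h)
              have hx'u : x' ∈ u0 := hAsub hx'A
              have hx'x1 : x' ≠ z := fun h => hx1A (h ▸ hx'A)
              by_contra hne'
              exact hx'C (Finset.mem_erase.2 ⟨hne', Finset.mem_erase.2 ⟨hx'x1, hx'u⟩⟩)
            rw [hx'x, hz'x1] at hCbsd
            have hCbcap : Cb ∩ u0 = C := by
              apply Finset.Subset.antisymm
              · intro a ha
                rw [Finset.mem_inter] at ha
                have hax : a ≠ x := fun h => by
                  have hm : x ∈ u0 \ Cb := by rw [hCbsd]; exact Finset.mem_insert_self _ _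
                  exact (Finset.mem_sdiff.1 hm).2 (h ▸ ha.1)
                have hax1 : a ≠ z := fun h => by
                  have hm : z ∈ u0 \ Cb := by
                    rw [hCbsd]; exact Finset.mem_insert_of_mem (Finset.mem_singleton_self _)
                  exact (Finset.mem_sdiff.1 hm).2 (h ▸ ha.1)
                exact Finset.mem_erase.2 ⟨hax, Finset.mem_erase.2 ⟨hax1, ha.2⟩⟩
              · intro a ha
                exact Finset.mem_inter.2 ⟨hCCb ha, hCu0 ha⟩
            have hCbk : Cb.card = k := hU.1 Cb hCbU
            have h3' := Finset.card_sdiff_add_card_inter Cb u0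
            rw [hCbk, hCbcap, hCcard] at h3'
            have hCbsdu : (Cb \ u0).card = 2 := by omega
            have hsub2 : ({ys, t} : Finset V) ⊆ Cb \ u0 := by
              intro a ha
              rcases Finset.mem_insert.1 ha with rfl | ha'
              · exact Finset.mem_sdiff.2 ⟨hysCb, hys⟩
              · rw [Finset.mem_singleton] at ha'
                subst ha'
                exact Finset.mem_sdiff.2 ⟨htCb, htu0⟩
            have hCbsdeq : Cb \ u0 = {ys, t} :=
              (Finset.eq_of_subset_of_card_le hsub2 (by
                rw [hCbsdu]
                exact Finset.one_lt_card.2 ⟨ys, by simp, t, by simp, fun h => hty h.symm⟩)).symm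
            have eB : B = C ∪ ({ys, t} : Finset V) := by
              rw [← hBcap, ← hBsdeq, inter_union_sdiff' _ _]
            have eCb : Cb = C ∪ ({ys, t} : Finset V) := by
              rw [← hCbcap, ← hCbsdeq, inter_union_sdiff' _ _]
            rw [eCb, eB]
        · rw [Finset.singleton_subset_iff, Finset.mem_filter]
          refine ⟨hBU, ?_⟩
          intro a ha
          rcases Finset.mem_insert.1 ha with rfl | h
          · exact htB
          · exact hCB h
      rw [hfiltereq, Finset.card_singleton] at heven
      exact (Nat.not_even_one) heven
    subst hty1
    refine ⟨x, hxA, ?_⟩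
    have eB : B = C ∪ ({ys, t} : Finset V) := by
      rw [← hBcap, ← hBsdeq, inter_union_sdiff' _ _]
    rw [eB]
    ext a
    simp only [Finset.mem_union, Finset.mem_insert, Finset.mem_singleton]
    tauto
  -- final assembly
  have hS2ne1 : ys ∉ u0.erase x1 := fun h => hys (Finset.mem_of_mem_erase h)
  have hS2ne2 : y1 ∉ insert ys (u0.erase x1) := by
    rw [Finset.mem_insert]
    rintro (h | h)
    · exact hy1ys h
    · exact hy1 (Finset.mem_of_mem_erase h)
  have hTsub1 : insert ys (u0.erase x1) ⊆ insert ys u0 := by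
    intro a ha
    rcases Finset.mem_insert.1 ha with rfl | h
    · exact Finset.mem_insert_self _ _
    · exact Finset.mem_insert_of_mem (Finset.mem_of_mem_erase h)
  have hTcard : (insert ys (u0.erase x1)).card = k := by
    rw [Finset.card_insert_of_notMem hS2ne1, Finset.card_erase_of_mem hx1u0, hu0k]
    omega
  refine ⟨insert ys u0, insert y1 (insert ys (u0.erase x1)), ?_, ?_, ?_, ?_⟩
  · rw [Finset.card_insert_of_notMem hys, hu0k]
  · rw [Finset.card_insert_of_notMem hS2ne2, hTcard]
  · exact ⟨insert ys (u0.erase x1), Finset.mem_inter.2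
      ⟨Finset.mem_powersetCard.2 ⟨hTsub1, hTcard⟩,
       Finset.mem_powersetCard.2 ⟨Finset.subset_insert _ _, hTcard⟩⟩⟩
  · set P1 := (insert ys u0).powersetCard k with hP1
    set P2 := (insert y1 (insert ys (u0.erase x1))).powersetCard k with hP2
    have hP1card : P1.card = k + 1 := by
      rw [hP1, Finset.card_powersetCard, Finset.card_insert_of_notMem hys, hu0k,
        Nat.choose_succ_self_right]
    have hP2card : P2.card = k + 1 := by
      rw [hP2, Finset.card_powersetCard, Finset.card_insert_of_notMem hS2ne2, hTcard,
        Nat.choose_succ_self_right]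
    have hTmem : insert ys (u0.erase x1) ∈ P1 ∩ P2 := Finset.mem_inter.2
      ⟨Finset.mem_powersetCard.2 ⟨hTsub1, hTcard⟩,
       Finset.mem_powersetCard.2 ⟨Finset.subset_insert _ _, hTcard⟩⟩
    have hXcard : (symmDiff P1 P2).card ≤ 2 * k := by
      have hXdef : symmDiff P1 P2 = (P1 \ P2) ∪ (P2 \ P1) := by
        ext v
        simp only [Finset.mem_symmDiff, Finset.mem_union, Finset.mem_sdiff]
      have h1 := Finset.card_sdiff_add_card_inter P1 P2
      have h2 := Finset.card_sdiff_add_card_inter P2 P1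
      rw [Finset.inter_comm] at h2
      have hI : 1 ≤ (P1 ∩ P2).card := Finset.card_pos.2 ⟨_, hTmem⟩
      calc (symmDiff P1 P2).card = ((P1 \ P2) ∪ (P2 \ P1)).card := by rw [hXdef]
      _ ≤ (P1 \ P2).card + (P2 \ P1).card := Finset.card_union_le _ _
      _ ≤ 2 * k := by omega
    have hUsub : U ⊆ symmDiff P1 P2 := by
      intro u hu
      have huk := hU.1 u hu
      rw [Finset.mem_symmDiff]
      rcases Nat.lt_or_ge (u0 \ u).card 2 with hlt | hge
      · interval_cases hcc : (u0 \ u).card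
        · -- u = u0
          have hsub2 : u0 ⊆ u := by
            rw [← Finset.sdiff_eq_empty_iff_subset]
            exact Finset.card_eq_zero.1 hcc
          have he : u0 = u := Finset.eq_of_subset_of_card_le hsub2 (by rw [huk, hu0k])
          subst he
          left
          constructor
          · exact Finset.mem_powersetCard.2 ⟨Finset.subset_insert _ _, hu0k⟩
          · rw [hP2, Finset.mem_powersetCard]
            rintro ⟨hsub3, -⟩
            have h := hsub3 hx1u0
            rcases Finset.mem_insert.1 h with h' | h'
            · exact hy1 (h' ▸ hx1u0)
            · rcases Finset.mem_insert.1 h' with h'' | h''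
              · exact hys (h'' ▸ hx1u0)
              · exact (Finset.mem_erase.1 h'').1 rfl
        · -- neighbour
          obtain ⟨x'', hx''⟩ := Finset.card_eq_one.1 hcc
          have hx''s : x'' ∈ u0 \ u := hx'' ▸ Finset.mem_singleton_self _
          have hx''u : x'' ∈ u0 := (Finset.mem_sdiff.1 hx''s).1
          have hunbr : u ∈ nbrOf U u0 x'' := Finset.mem_filter.2 ⟨hu, hx''⟩
          rcases eq_or_ne x'' x1 with rfl | hne''
          · have hv1nbr : insert y1 (u0.erase x'') ∈ nbrOf U u0 x'' := by
              rw [hnbrx1]; exact Finset.mem_singleton_self _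
            have heq := hnbru x'' hx1u0 u hunbr _ hv1nbr
            rw [heq]
            right
            constructor
            · rw [hP2, Finset.mem_powersetCard]
              refine ⟨?_, by rw [← heq]; exact huk⟩
              intro a ha
              rcases Finset.mem_insert.1 ha with rfl | h
              · exact Finset.mem_insert_self _ _
              · exact Finset.mem_insert_of_mem (Finset.mem_insert_of_mem h)
            · rw [hP1, Finset.mem_powersetCard]
              rintro ⟨hsub3, -⟩
              have h := hsub3 (Finset.mem_insert_self y1 _)
              rcases Finset.mem_insert.1 h with h' | h'
              · exact hy1ys h'
              · exact hy1 h'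
          · have hx''A : x'' ∈ A := hmemA x'' hx''u hne''
            have hvx : insert ys (u0.erase x'') ∈ nbrOf U u0 x'' :=
              Finset.mem_filter.2 ⟨hAys x'' hx''A, sdiff_insert_erase hx''u hys⟩
            have heq := hnbru x'' hx''u u hunbr _ hvx
            rw [heq]
            left
            constructor
            · rw [hP1, Finset.mem_powersetCard]
              refine ⟨?_, by rw [← heq]; exact huk⟩
              intro a ha
              rcases Finset.mem_insert.1 ha with rfl | h
              · exact Finset.mem_insert_self _ _
              · exact Finset.mem_insert_of_mem (Finset.mem_of_mem_erase h)
            · rw [hP2, Finset.mem_powersetCard]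
              rintro ⟨hsub3, -⟩
              have hx1u : x1 ∈ insert ys (u0.erase x'') :=
                Finset.mem_insert_of_mem (Finset.mem_erase.2 ⟨fun h => hne'' h.symm, hx1u0⟩)
              have h := hsub3 hx1u
              rcases Finset.mem_insert.1 h with h' | h'
              · exact hy1 (h' ▸ hx1u0)
              · rcases Finset.mem_insert.1 h' with h'' | h''
                · exact hys (h'' ▸ hx1u0)
                · exact (Finset.mem_erase.1 h'').1 rfl
      · -- far
        have hufar : u ∈ farOf U u0 := Finset.mem_filter.2 ⟨hu, hge⟩
        obtain ⟨x, hxA, hueq⟩ := hfarB u hufar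
        right
        constructor
        · rw [hP2, Finset.mem_powersetCard]
          refine ⟨?_, huk⟩
          rw [hueq]
          intro a ha
          rcases Finset.mem_insert.1 ha with rfl | h
          · exact Finset.mem_insert_of_mem (Finset.mem_insert_self _ _)
          · rcases Finset.mem_insert.1 h with rfl | h'
            · exact Finset.mem_insert_self _ _
            · exact Finset.mem_insert_of_mem
                (Finset.mem_insert_of_mem (Finset.mem_of_mem_erase h'))
        · rw [hP1, Finset.mem_powersetCard]
          rintro ⟨hsub3, -⟩
          have hy1u : y1 ∈ u := by
            rw [hueq]
            exact Finset.mem_insert_of_mem (Finset.mem_insert_self _ _)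
          have h := hsub3 hy1u
          rcases Finset.mem_insert.1 h with h' | h'
          · exact hy1ys h'
          · exact hy1 h'
    exact Finset.eq_of_subset_of_card_le hUsub (by rw [hcard]; exact hXcard)

end S15

/-- There is no `k`-unitrade of cardinality strictly between `k+1` and `2k`,
and every `k`-unitrade of cardinality exactly `2k` is the symmetric difference
of two unitrades `W_k(S1)`, `W_k(S2)` (all `k`-subsets of `(k+1)`-sets) sharing
at least one common block. -/
theorem stmt15 (V : Type*) [DecidableEq V] [Infinite V] (k : ℕ) :
    (∀ U : Finset (Finset V), IsUnitrade k U →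
        ¬(k + 1 < U.card ∧ U.card < 2 * k)) ∧
      (∀ U : Finset (Finset V), IsUnitrade k U → U.card = 2 * k →
        ∃ S1 S2 : Finset V, S1.card = k + 1 ∧ S2.card = k + 1 ∧
          (S1.powersetCard k ∩ S2.powersetCard k).Nonempty ∧
          U = symmDiff (S1.powersetCard k) (S2.powersetCard k)) := by
  constructor
  · intro U hU h
    obtain ⟨h1, h2⟩ := h
    have hk : 2 ≤ k := by omega
    have hne : U.Nonempty := Finset.card_pos.1 (by omega)
    rcases S15.main hU hne hk with h | h <;> omega
  · intro U hU hcard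
    rcases Nat.lt_or_ge k 2 with hk | hk
    · interval_cases k
      · -- k = 0
        have hU0 : U = ∅ := Finset.card_eq_zero.1 (by omega)
        have hnv : Nonempty V := inferInstance
        obtain ⟨v⟩ := hnv
        refine ⟨{v}, {v}, by simp, by simp, ⟨∅, ?_⟩, ?_⟩
        · exact Finset.mem_inter.2 ⟨Finset.mem_powersetCard.2 ⟨Finset.empty_subset _, rfl⟩,
            Finset.mem_powersetCard.2 ⟨Finset.empty_subset _, rfl⟩⟩
        · rw [hU0, symmDiff_self]
          rfl
      · -- k = 1
        obtain ⟨u, v, huv, hUeq⟩ := Finset.card_eq_two.1 (show U.card = 2 by omega)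
        have huU : u ∈ U := by rw [hUeq]; exact Finset.mem_insert_self _ _
        have hvU : v ∈ U := by
          rw [hUeq]; exact Finset.mem_insert_of_mem (Finset.mem_singleton_self _)
        obtain ⟨a, ha⟩ := Finset.card_eq_one.1 (hU.1 u huU)
        obtain ⟨b, hb⟩ := Finset.card_eq_one.1 (hU.1 v hvU)
        obtain ⟨c, hc⟩ := Infinite.exists_notMem_finset ({a, b} : Finset V)
        have hca : c ≠ a := fun h => hc (by rw [h]; exact Finset.mem_insert_self _ _)
        have hcb : c ≠ b := fun h =>
          hc (by rw [h]; exact Finset.mem_insert_of_mem (Finset.mem_singleton_self _))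
        have hab : a ≠ b := fun h => huv (by rw [ha, hb, h])
        have hpc : ∀ x y : V, ({x, y} : Finset V).powersetCard 1 = {{x}, {y}} := by
          intro x y
          ext s
          simp only [Finset.mem_powersetCard, Finset.mem_insert, Finset.mem_singleton]
          constructor
          · rintro ⟨hsub, hc1⟩
            obtain ⟨t, rfl⟩ := Finset.card_eq_one.1 hc1
            have ht := hsub (Finset.mem_singleton_self t)
            rcases Finset.mem_insert.1 ht with rfl | h
            · left; rfl
            · right; rw [Finset.mem_singleton.1 h]
          · rintro (rfl | rfl)
            · exact ⟨Finset.singleton_subset_iff.2 (Finset.mem_insert_self _ _),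
                Finset.card_singleton _⟩
            · exact ⟨Finset.singleton_subset_iff.2
                (Finset.mem_insert_of_mem (Finset.mem_singleton_self _)),
                Finset.card_singleton _⟩
        refine ⟨{a, c}, {b, c}, ?_, ?_, ?_, ?_⟩
        · rw [Finset.card_insert_of_notMem
            (fun h => hca (Finset.mem_singleton.1 h).symm), Finset.card_singleton]
        · rw [Finset.card_insert_of_notMem
            (fun h => hcb (Finset.mem_singleton.1 h).symm), Finset.card_singleton]
        · refine ⟨{c}, Finset.mem_inter.2 ⟨?_, ?_⟩⟩ <;> rw [hpc] <;>
            exact Finset.mem_insert_of_mem (Finset.mem_singleton_self _)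
        · rw [hpc, hpc, hUeq, ha, hb]
          have h1 : ({a} : Finset V) ≠ {b} := fun h => hab (Finset.singleton_injective h)
          have h2 : ({a} : Finset V) ≠ {c} := fun h => hca (Finset.singleton_injective h).symm
          have h3 : ({b} : Finset V) ≠ {c} := fun h => hcb (Finset.singleton_injective h).symm
          ext s
          simp only [Finset.mem_symmDiff, Finset.mem_insert, Finset.mem_singleton]
          constructor
          · rintro (rfl | rfl)
            · exact Or.inl ⟨Or.inl rfl, by rintro (h | h); exacts [h1 h, h2 h]⟩
            · exact Or.inr ⟨Or.inl rfl, by rintro (h | h); exacts [h1 h.symm, h3 h]⟩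
          · rintro (⟨h | h, hn⟩ | ⟨h | h, hn⟩)
            · exact Or.inl h
            · exact absurd (Or.inr h) hn
            · exact Or.inr h
            · exact absurd (Or.inr h) hn
    · exact S15.main2 hU hk hcard
end
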